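/- arXiv:2410.12576 — 3 statements merged into one kernel-verified Lean document; each statement's English description precedes it below -/
import Mathlib

section
/- Let ρ, σ be quantum states on H and suppose H decomposes as an orthogonal direct sum H = ⊕_{i∈I} H_i with projections Π_i, and σ = Σ_i σ_i with supp(σ_i) ⊆ H_i. Then F(Σ_i Π_i ρ Π_i, σ) ≤ √|I| · F(ρ, σ). -/
open scoped Matrix ComplexOrder

noncomputable section
open Classical

namespace QD

variable {n : Type*} [Fintype n] [DecidableEq n]

/-- Apply a real function to a Hermitian matrix via its spectral decomposition;
junk value `0` on non-Hermitian input. -/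
def mfun (f : ℝ → ℝ) (A : Matrix n n ℂ) : Matrix n n ℂ :=
  if hA : A.IsHermitian then
    (hA.eigenvectorUnitary : Matrix n n ℂ) *
      Matrix.diagonal (fun i => (f (hA.eigenvalues i) : ℂ)) *
      (star (hA.eigenvectorUnitary : Matrix n n ℂ))
  else 0

/-- Matrix logarithm (base 2) taken on the support. -/
def mlog (A : Matrix n n ℂ) : Matrix n n ℂ := mfun (fun x => Real.logb 2 x) A

/-- Real power of a positive semidefinite matrix, taken on the support. -/
def mpow (A : Matrix n n ℂ) (c : ℝ) : Matrix n n ℂ :=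
  mfun (fun x => if x = 0 then 0 else x ^ c) A

/-- Trace (Schatten-1) norm. -/
def traceNorm (A : Matrix n n ℂ) : ℝ := ((mfun Real.sqrt (Aᴴ * A)).trace).re

/-- Fidelity `F(ρ,σ) = ‖√ρ√σ‖₁`. -/
def fid (ρ σ : Matrix n n ℂ) : ℝ := traceNorm (mfun Real.sqrt ρ * mfun Real.sqrt σ)

/-- Purified distance. -/
def purD (ρ σ : Matrix n n ℂ) : ℝ := Real.sqrt (1 - (fid ρ σ) ^ 2)

/-- Trace distance. -/
def trD (ρ σ : Matrix n n ℂ) : ℝ := traceNorm (ρ - σ) / 2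

/-- `suppLE ρ σ` means `supp ρ ⊆ supp σ` (equivalently `ker σ ⊆ ker ρ` for PSD matrices). -/
def suppLE (ρ σ : Matrix n n ℂ) : Prop := ∀ v : n → ℂ, σ.mulVec v = 0 → ρ.mulVec v = 0

/-- Umegaki relative entropy (base-2 logarithm), as a real number. -/
def relEnt (τ ρ : Matrix n n ℂ) : ℝ := ((τ * (mlog τ - mlog ρ)).trace).re

/-- Umegaki relative entropy with the value `⊤` when the support condition fails. -/
def relEntE (τ ρ : Matrix n n ℂ) : EReal :=
  if suppLE τ ρ then ((relEnt τ ρ : ℝ) : EReal) else ⊤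

/-- von Neumann entropy (base-2 logarithm). -/
def vnEnt (τ : Matrix n n ℂ) : ℝ := -((τ * mlog τ).trace).re

/-- The sandwiched Rényi quantity `Q*_α`. -/
def Qstar (α : ℝ) (ρ σ : Matrix n n ℂ) : ℝ :=
  ((mfun (fun x => if x = 0 then 0 else x ^ α)
      (mpow σ ((1 - α)/(2*α)) * ρ * mpow σ ((1 - α)/(2*α)))).trace).re

/-- The sandwiched Rényi divergence of order `α`. -/
def Dstar (α : ℝ) (ρ σ : Matrix n n ℂ) : ℝ := (α - 1)⁻¹ * Real.logb 2 (Qstar α ρ σ)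

/-- The sandwiched Rényi divergence with the `+∞` conventions. -/
def DstarE (α : ℝ) (ρ σ : Matrix n n ℂ) : EReal :=
  if (α < 1 ∧ 0 < Qstar α ρ σ) ∨ (1 < α ∧ suppLE ρ σ) ∨ α = 1 then
    ((Dstar α ρ σ : ℝ) : EReal) else ⊤

/-- The Petz Rényi divergence of order `β`. -/
def Dpetz (β : ℝ) (ρ σ : Matrix n n ℂ) : ℝ :=
  (β - 1)⁻¹ * Real.logb 2 (((mpow ρ β * mpow σ (1 - β)).trace).re)

/-- The log-Euclidean Rényi quantity `Q♭_α = Tr 2^{α log ρ + (1-α) log σ}`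
(with supports handled via the Lie–Trotter limit). -/
def Qflat (α : ℝ) (ρ σ : Matrix n n ℂ) : ℝ :=
  Filter.limUnder Filter.atTop
    (fun k : ℕ => (((mpow ρ (α / k) * mpow σ ((1 - α) / k)) ^ k).trace).re)

/-- The log-Euclidean Rényi divergence of order `α`. -/
def Dflat (α : ℝ) (ρ σ : Matrix n n ℂ) : ℝ := (α - 1)⁻¹ * Real.logb 2 (Qflat α ρ σ)

/-- The log-Euclidean Rényi divergence with the `+∞` convention. -/
def DflatE (α : ℝ) (ρ σ : Matrix n n ℂ) : EReal :=
  if 0 < Qflat α ρ σ then ((Dflat α ρ σ : ℝ) : EReal) else ⊤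

/-- The pinching channel associated with (the spectral projections of) `σ`. -/
def pinch (σ X : Matrix n n ℂ) : Matrix n n ℂ :=
  if hσ : σ.IsHermitian then
    ∑ lam ∈ Finset.univ.image hσ.eigenvalues,
      mfun (fun x => if x = lam then 1 else 0) σ * X *
        mfun (fun x => if x = lam then 1 else 0) σ
  else X

/-- The number of distinct eigenvalues `v(σ)`. -/
def numEig (σ : Matrix n n ℂ) : ℕ :=
  if hσ : σ.IsHermitian then (Finset.univ.image hσ.eigenvalues).card else 1

/-- Trace of the positive part of a Hermitian matrix. -/
def posPartTrace (A : Matrix n n ℂ) : ℝ := ((mfun (fun x => max x 0) A).trace).re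

/-- Binary entropy (base 2). -/
def binEnt (x : ℝ) : ℝ := -(x * Real.logb 2 x) - (1 - x) * Real.logb 2 (1 - x)

/-- A quantum state: positive semidefinite with unit trace. -/
def IsState (ρ : Matrix n n ℂ) : Prop := ρ.PosSemidef ∧ ρ.trace = 1

end QD

/-!
Put `B = √σ ρ √σ`, so that `F(ρ, σ) = Tr √B`. Every `Πᵢ` commutes with `σ`, hence with `√σ`, so
pinching `ρ` pinches `B`; the blocks `Πᵢ B Πᵢ` are mutually orthogonal, and
`F(Σᵢ Πᵢ ρ Πᵢ, σ) = Σᵢ Tr √(Πᵢ B Πᵢ)`.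

With `M = √B` and `Rᵢ` the inverse square root of `Πᵢ B Πᵢ` on its support,
`Tr √(Πᵢ B Πᵢ) = Tr (M Wᵢ)` for the contractions `Wᵢ = Πᵢ Rᵢ Πᵢ M`. Since `Wᵢ* Wⱼ = 0` for
`i ≠ j`, the C*-identity gives `‖Σᵢ Wᵢ‖² ≤ Σᵢ ‖Wᵢ‖² ≤ |I|`, and therefore
`Σᵢ Tr √(Πᵢ B Πᵢ) = Tr (M Σᵢ Wᵢ) ≤ ‖Σᵢ Wᵢ‖ Tr M ≤ √|I| F(ρ, σ)`.
-/

open scoped Matrix.Norms.L2Operator MatrixOrder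

lemma norm_sum_sq_le_sum_norm_sq {E ι : Type*} [NonUnitalNormedRing E] [StarRing E] [CStarRing E]
    (s : Finset ι) (w : ι → E) (h : ∀ i j, i ≠ j → star (w i) * w j = 0) :
    ‖∑ i ∈ s, w i‖ ^ 2 ≤ ∑ i ∈ s, ‖w i‖ ^ 2 := by
  classical
  have hdiag : star (∑ i ∈ s, w i) * ∑ i ∈ s, w i = ∑ i ∈ s, star (w i) * w i := by
    rw [star_sum, Finset.sum_mul_sum]
    exact Finset.sum_congr rfl fun i hi =>
      Finset.sum_eq_single_of_mem i hi fun j _ hji => h i j hji.symm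
  calc ‖∑ i ∈ s, w i‖ ^ 2 = ‖∑ i ∈ s, star (w i) * w i‖ := by
        rw [← hdiag, CStarRing.norm_star_mul_self, sq]
    _ ≤ ∑ i ∈ s, ‖star (w i) * w i‖ := norm_sum_le _ _
    _ = ∑ i ∈ s, ‖w i‖ ^ 2 := by simp only [CStarRing.norm_star_mul_self, sq]

lemma commute_sum_of_compress_eq {R ι : Type*} [Semiring R] (s : Finset ι) {p x : ι → R}
    (hidem : ∀ i, p i * p i = p i) (horth : ∀ i j, i ≠ j → p i * p j = 0)
    (hx : ∀ i, p i * x i * p i = x i) (k : ι) : Commute (∑ i ∈ s, x i) (p k) := by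
  refine Commute.sum_left _ _ _ fun i _ => ?_
  rw [← hx i]
  by_cases hik : i = k
  · subst hik
    simp only [Commute, SemiconjBy, mul_assoc, hidem]
    rw [← mul_assoc (p i) (p i), hidem]
  · show p i * x i * p i * p k = p k * (p i * x i * p i)
    rw [mul_assoc _ (p i) (p k), horth i k hik, ← mul_assoc, ← mul_assoc, horth k i (Ne.symm hik)]
    simp

lemma mul_sum_compress_mul_of_commute {R ι : Type*} [Semiring R] (s : Finset ι) {p : ι → R}
    {c : R} (hc : ∀ i, Commute c (p i)) (x : R) :
    c * (∑ i ∈ s, p i * x * p i) * c = ∑ i ∈ s, p i * (c * x * c) * p i := by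
  rw [Finset.mul_sum, Finset.sum_mul]
  refine Finset.sum_congr rfl fun i _ => ?_
  simp only [← mul_assoc, (hc i).eq]
  simp only [mul_assoc, (hc i).eq]

section CStarAlgebra

variable {A : Type*} [CStarAlgebra A] [PartialOrder A] [StarOrderedRing A]

lemma cfc_sqrt_eq_sqrt {a : A} (ha : 0 ≤ a) : cfc Real.sqrt a = CFC.sqrt a := by
  rw [CFC.sqrt_eq_real_sqrt a, cfcₙ_eq_cfc]

lemma cfc_sqrt_mul_self {a : A} (ha : 0 ≤ a) : cfc Real.sqrt a * cfc Real.sqrt a = a := by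
  rw [cfc_sqrt_eq_sqrt ha, CFC.sqrt_mul_sqrt_self a]

lemma cfc_sqrt_eq_of_mul_self {a b : A} (hb : 0 ≤ b) (h : b * b = a) : cfc Real.sqrt a = b := by
  have ha : 0 ≤ a := by
    simpa [h, hb.isSelfAdjoint.star_eq] using star_mul_self_nonneg b
  rw [cfc_sqrt_eq_sqrt ha, CFC.sqrt_unique h hb]

lemma cfc_sqrt_mul_eq_zero {a x : A} (ha : 0 ≤ a) (hax : a * x = 0) :
    cfc Real.sqrt a * x = 0 := by
  rw [← CStarRing.star_mul_self_eq_zero_iff, star_mul,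
    (IsSelfAdjoint.cfc (f := Real.sqrt)).star_eq]
  calc star x * cfc Real.sqrt a * (cfc Real.sqrt a * x)
      = star x * (cfc Real.sqrt a * cfc Real.sqrt a * x) := by noncomm_ring
    _ = 0 := by rw [cfc_sqrt_mul_self ha, hax, mul_zero]

lemma cfc_sqrt_mul_cfc_sqrt_eq_zero {a b : A} (ha : 0 ≤ a) (hb : 0 ≤ b) (hab : a * b = 0) :
    cfc Real.sqrt a * cfc Real.sqrt b = 0 := by
  have hba : b * a = 0 := by
    simpa [ha.isSelfAdjoint.star_eq, hb.isSelfAdjoint.star_eq] using congr_arg star hab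
  have h : a * cfc Real.sqrt b = 0 := by
    simpa [ha.isSelfAdjoint.star_eq, (IsSelfAdjoint.cfc (f := Real.sqrt)).star_eq]
      using congr_arg star (cfc_sqrt_mul_eq_zero hb hba)
  exact cfc_sqrt_mul_eq_zero ha h

lemma cfc_sqrt_sum_of_mul_eq_zero {ι : Type*} (s : Finset ι) {a : ι → A} (ha : ∀ i, 0 ≤ a i)
    (horth : ∀ i j, i ≠ j → a i * a j = 0) :
    cfc Real.sqrt (∑ i ∈ s, a i) = ∑ i ∈ s, cfc Real.sqrt (a i) := by
  classical
  refine cfc_sqrt_eq_of_mul_self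
    (Finset.sum_nonneg fun i _ => cfc_nonneg fun x _ => Real.sqrt_nonneg x) ?_
  rw [Finset.sum_mul_sum]
  refine Finset.sum_congr rfl fun i hi => ?_
  rw [Finset.sum_eq_single_of_mem i hi fun j _ hji =>
    cfc_sqrt_mul_cfc_sqrt_eq_zero (ha i) (ha j) (horth i j hji.symm)]
  exact cfc_sqrt_mul_self (ha i)

end CStarAlgebra

namespace Matrix

variable {n : Type*} [Fintype n] [DecidableEq n]

lemma norm_apply_le_l2_opNorm {𝕜 m : Type*} [RCLike 𝕜] [Fintype m] (A : Matrix m n 𝕜)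
    (i : m) (j : n) : ‖A i j‖ ≤ ‖A‖ := by
  have h := (PiLp.norm_apply_le ((EuclideanSpace.equiv m 𝕜).symm (A *ᵥ Pi.single j 1)) i).trans
    (A.l2_opNorm_mulVec (EuclideanSpace.single j 1))
  rwa [mulVec_single_one, PiLp.norm_single, norm_one, mul_one] at h

lemma re_trace_mul_le_l2_opNorm_mul {S : Matrix n n ℂ} (hS : S.PosSemidef) (X : Matrix n n ℂ) :
    (S * X).trace.re ≤ ‖X‖ * S.trace.re := by
  set U := hS.1.eigenvectorUnitary
  set d := hS.1.eigenvalues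
  have hdiag : ∀ k, ‖(star (U : Matrix n n ℂ) * X * U) k k‖ ≤ ‖X‖ := fun k =>
    (norm_apply_le_l2_opNorm _ k k).trans_eq <| by
      rw [← Unitary.coe_star, CStarRing.norm_mul_coe_unitary, CStarRing.norm_coe_unitary_mul]
  have htrace : (S * X).trace = ∑ k, (d k : ℂ) * (star (U : Matrix n n ℂ) * X * U) k k := by
    have hS' : S = (U : Matrix n n ℂ) * diagonal (RCLike.ofReal ∘ d) * star (U : Matrix n n ℂ) :=
      hS.1.spectral_theorem
    rw [hS', mul_assoc, trace_mul_cycle, trace_mul_comm]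
    simp [trace, diagonal_mul]
  have htrS : S.trace.re = ∑ k, d k := by simp [d, hS.1.trace_eq_sum_eigenvalues]
  rw [htrace, Complex.re_sum, htrS, Finset.mul_sum]
  refine Finset.sum_le_sum fun k _ => ?_
  rw [Complex.re_ofReal_mul, mul_comm ‖X‖]
  exact mul_le_mul_of_nonneg_left ((Complex.re_le_norm _).trans (hdiag k))
    (hS.eigenvalues_nonneg k)

lemma exists_contraction_trace_cfc_sqrt_compress {M P : Matrix n n ℂ} (hM : IsSelfAdjoint M)
    (hP : IsStarProjection P) :
    ∃ R, (cfc Real.sqrt (P * (M * M) * P)).trace = (M * (P * R * P * M)).trace ∧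
      ‖P * R * P * M‖ ≤ 1 := by
  set a := P * (M * M) * P
  -- since `(√0)⁻¹ = 0`, `R` is the inverse square root of `a` on its support
  set R := cfc (fun x => (√x)⁻¹) a
  have hR : IsSelfAdjoint R := IsSelfAdjoint.cfc
  have hRa : R * a = cfc Real.sqrt a := by
    conv_lhs => rw [← cfc_id' ℝ a (by
      simp only [a, IsSelfAdjoint, star_mul, hP.isSelfAdjoint.star_eq, hM.star_eq, mul_assoc])]
    rw [← cfc_mul _ _ a (a.finite_real_spectrum.continuousOn _)]
    refine cfc_congr fun x _ => ?_
    rcases le_or_gt x 0 with hx | hx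
    · simp [Real.sqrt_eq_zero'.mpr hx]
    · rw [inv_mul_eq_iff_eq_mul₀ (Real.sqrt_pos.mpr hx).ne', Real.mul_self_sqrt hx.le]
  refine ⟨R, ?_, ?_⟩
  · rw [← hRa, trace_mul_comm M]
    simp only [a, mul_assoc]
    rw [trace_mul_comm P]
    simp only [mul_assoc]
  · have hRaR : ‖R * a * R‖ ≤ 1 := by
      rw [hRa, ← cfc_mul _ _ a (by fun_prop) (a.finite_real_spectrum.continuousOn _)]
      refine norm_cfc_le zero_le_one fun x _ => ?_
      by_cases hx : √x = 0 <;> simp [hx]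
    have hW : P * R * P * M * star (P * R * P * M) = P * (R * a * R) * P := by
      simp only [a, star_mul, hP.isSelfAdjoint.star_eq, hM.star_eq, hR.star_eq, mul_assoc]
    have hsq : ‖P * R * P * M‖ * ‖P * R * P * M‖ ≤ 1 := by
      rw [← CStarRing.norm_self_mul_star, hW]
      calc ‖P * (R * a * R) * P‖ ≤ ‖P‖ * ‖R * a * R‖ * ‖P‖ := norm_mul₃_le
        _ ≤ 1 * 1 * 1 := by gcongr <;> exact hP.norm_le
        _ = 1 := by norm_num
    nlinarith [norm_nonneg (P * R * P * M)]

lemma sum_re_trace_cfc_sqrt_compress_le {ι : Type*} [Fintype ι] {B : Matrix n n ℂ} (hB : 0 ≤ B)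
    {P : ι → Matrix n n ℂ} (hP : ∀ i, IsStarProjection (P i))
    (horth : ∀ i j, i ≠ j → P i * P j = 0) :
    ∑ i, (cfc Real.sqrt (P i * B * P i)).trace.re ≤
      √(Fintype.card ι) * (cfc Real.sqrt B).trace.re := by
  set M := cfc Real.sqrt B
  have hM : M.PosSemidef := nonneg_iff_posSemidef.mp (cfc_nonneg fun x _ => Real.sqrt_nonneg x)
  choose R hR using fun i => exists_contraction_trace_cfc_sqrt_compress hM.1 (hP i)
  set W := fun i => P i * R i * P i * M
  have horthW : ∀ i j, i ≠ j → star (W i) * W j = 0 := by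
    intro i j hij
    simp only [W, star_mul, (hP i).isSelfAdjoint.star_eq, mul_assoc]
    rw [← mul_assoc (P i) (P j), horth i j hij]
    simp
  have hnormW : ‖∑ i, W i‖ ≤ √(Fintype.card ι) := by
    rw [Real.le_sqrt (norm_nonneg _) (Nat.cast_nonneg _)]
    calc _ ≤ ∑ i, ‖W i‖ ^ 2 := norm_sum_sq_le_sum_norm_sq _ W horthW
      _ ≤ ∑ i : ι, (1 : ℝ) := Finset.sum_le_sum fun i _ => pow_le_one₀ (norm_nonneg _) (hR i).2
      _ = Fintype.card ι := by simp
  calc ∑ i, (cfc Real.sqrt (P i * B * P i)).trace.re = (M * ∑ i, W i).trace.re := by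
        rw [Finset.mul_sum, trace_sum, Complex.re_sum, ← cfc_sqrt_mul_self hB]
        exact Finset.sum_congr rfl fun i _ => congrArg Complex.re (hR i).1
    _ ≤ ‖∑ i, W i‖ * M.trace.re := re_trace_mul_le_l2_opNorm_mul hM _
    _ ≤ √(Fintype.card ι) * M.trace.re :=
        mul_le_mul_of_nonneg_right hnormW (Complex.nonneg_iff.mp hM.trace_nonneg).1

end Matrix

namespace QD

variable {n : Type*} [Fintype n] [DecidableEq n]

lemma mfun_eq_cfc (f : ℝ → ℝ) (A : Matrix n n ℂ) : mfun f A = cfc f A := by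
  by_cases hA : A.IsHermitian
  · rw [hA.cfc_eq, mfun, dif_pos hA, Matrix.IsHermitian.cfc, Unitary.conjStarAlgAut_apply]
    rfl
  · rw [mfun, dif_neg hA]
    exact (cfc_apply_of_not_predicate A hA).symm

lemma fid_eq_re_trace_cfc_sqrt {ρ : Matrix n n ℂ} (hρ : ρ.PosSemidef) (σ : Matrix n n ℂ) :
    fid ρ σ = (cfc Real.sqrt (cfc Real.sqrt σ * ρ * cfc Real.sqrt σ)).trace.re := by
  have hself : ∀ A : Matrix n n ℂ, (cfc Real.sqrt A)ᴴ = cfc Real.sqrt A := fun A =>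
    (IsSelfAdjoint.cfc (f := Real.sqrt) (a := A)).star_eq
  rw [fid, traceNorm, mfun_eq_cfc, mfun_eq_cfc, mfun_eq_cfc, Matrix.conjTranspose_mul, hself,
    hself, mul_assoc, ← mul_assoc (cfc Real.sqrt ρ), cfc_sqrt_mul_self hρ.nonneg, mul_assoc]

end QD

open QD Matrix in
theorem fid_pinched_le_sqrt_card_mul_fid_general
    {n : Type*} [Fintype n] [DecidableEq n] {ι : Type*} [Fintype ι]
    (P : ι → Matrix n n ℂ) (ρ σ : Matrix n n ℂ) (σs : ι → Matrix n n ℂ)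
    (hρ : IsState ρ)
    (hherm : ∀ i, (P i)ᴴ = P i) (hidem : ∀ i, P i * P i = P i)
    (horth : ∀ i j, i ≠ j → P i * P j = 0)
    (hdecomp : σ = ∑ i, σs i) (hsupp : ∀ i, P i * σs i * P i = σs i) :
    fid (∑ i, P i * ρ * P i) σ ≤ Real.sqrt (Fintype.card ι) * fid ρ σ := by
  have hP : ∀ i, IsStarProjection (P i) := fun i => ⟨hidem i, hherm i⟩
  set S := cfc Real.sqrt σ
  have hS : ∀ k, Commute S (P k) := fun k =>
    (hdecomp ▸ commute_sum_of_compress_eq Finset.univ hidem horth hsupp k).cfc_real _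
  have hB : 0 ≤ S * ρ * S := IsSelfAdjoint.cfc.conjugate_nonneg hρ.1.nonneg
  have hpinched : (∑ i, P i * ρ * P i).PosSemidef := nonneg_iff_posSemidef.mp <|
    Finset.sum_nonneg fun i _ => (hP i).isSelfAdjoint.conjugate_nonneg hρ.1.nonneg
  have hblocks : ∀ i j, i ≠ j → P i * (S * ρ * S) * P i * (P j * (S * ρ * S) * P j) = 0 := by
    intro i j hij
    simp only [mul_assoc]
    rw [← mul_assoc (P i) (P j), horth i j hij]
    simp
  rw [fid_eq_re_trace_cfc_sqrt hpinched, fid_eq_re_trace_cfc_sqrt hρ.1,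
    mul_sum_compress_mul_of_commute _ hS,
    cfc_sqrt_sum_of_mul_eq_zero _ (fun i => (hP i).isSelfAdjoint.conjugate_nonneg hB) hblocks,
    trace_sum, Complex.re_sum]
  exact sum_re_trace_cfc_sqrt_compress_le hB hP horth

open QD Matrix in
/-- If `H = ⊕ᵢ Hᵢ` with projections `Pᵢ` and `σ = Σᵢ σᵢ` with
`supp σᵢ ⊆ Hᵢ`, then `F(Σᵢ Pᵢ ρ Pᵢ, σ) ≤ √|I| · F(ρ, σ)`. -/
theorem fid_pinched_le_sqrt_card_mul_fid
    {n : Type*} [Fintype n] [DecidableEq n] {ι : Type*} [Fintype ι]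
    (P : ι → Matrix n n ℂ) (ρ σ : Matrix n n ℂ) (σs : ι → Matrix n n ℂ)
    (hρ : IsState ρ) (hσ : IsState σ)
    (hherm : ∀ i, (P i)ᴴ = P i) (hidem : ∀ i, P i * P i = P i)
    (horth : ∀ i j, i ≠ j → P i * P j = 0) (hsum : ∑ i, P i = 1)
    (hdecomp : σ = ∑ i, σs i) (hsupp : ∀ i, P i * σs i * P i = σs i) :
    fid (∑ i, P i * ρ * P i) σ ≤ Real.sqrt (Fintype.card ι) * fid ρ σ :=
  fid_pinched_le_sqrt_card_mul_fid_general P ρ σ σs hρ hherm hidem horth hdecomp hsupp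
end
end

section
/- Pinching inequality: for a self-adjoint operator A with v(A) distinct eigenvalues and spectral projections P_1,…,P_r, every positive semidefinite operator σ satisfies σ ≤ v(A) · Σ_i P_i σ P_i in the Loewner order. -/
open scoped Matrix ComplexOrder

noncomputable section
open Classical

/-!
Expanding `∑ i, ∑ j, (Pᵢ - Pⱼ) σ (Pᵢ - Pⱼ)` and using `∑ i, Pᵢ = 1` gives `2 (r ∑ i, Pᵢ σ Pᵢ - σ)`.
When the `Pᵢ` are Hermitian, each summand is a congruence of `σ`, hence positive semidefinite.
-/

theorem Finset.sum_sum_sub_mul_mul_sub {R ι : Type*} [Ring R] [Fintype ι] (a : ι → R) (s : R) :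
    ∑ i, ∑ j, (a i - a j) * s * (a i - a j) =
      2 • (Fintype.card ι • ∑ i, a i * s * a i - (∑ i, a i) * s * ∑ i, a i) := by
  simp only [sub_mul, mul_sub, Finset.sum_sub_distrib, Finset.sum_mul, Finset.mul_sum,
    Finset.sum_const, Finset.card_univ]
  rw [Finset.sum_comm (f := fun i j => a j * s * a i), ← Finset.smul_sum]
  abel

namespace Matrix

theorem PosSemidef.card_smul_sum_mul_mul_sub {n ι 𝕜 : Type*} [Fintype n] [DecidableEq n]
    [Fintype ι] [RCLike 𝕜] {σ : Matrix n n 𝕜} (hσ : σ.PosSemidef) {P : ι → Matrix n n 𝕜}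
    (hP : ∀ i, (P i).IsHermitian) (hsum : ∑ i, P i = 1) :
    ((Fintype.card ι : 𝕜) • ∑ i, P i * σ * P i - σ).PosSemidef := by
  have hdiff : (∑ i, ∑ j, (P i - P j) * σ * (P i - P j)).PosSemidef :=
    posSemidef_sum _ fun i _ => posSemidef_sum _ fun j _ => by
      simpa [((hP i).sub (hP j)).eq] using hσ.conjTranspose_mul_mul_same (P i - P j)
  rw [Finset.sum_sum_sub_mul_mul_sub, hsum, one_mul, mul_one] at hdiff
  have half := hdiff.smul (inv_nonneg.mpr (zero_le_two (α := 𝕜)))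
  rwa [← Nat.cast_smul_eq_nsmul 𝕜, smul_smul, Nat.cast_ofNat, inv_mul_cancel₀ two_ne_zero,
    one_smul, ← Nat.cast_smul_eq_nsmul 𝕜] at half

end Matrix

open QD Matrix in
theorem pinching_inequality_general
    {n : Type*} [Fintype n] [DecidableEq n] (r : ℕ) (σ : Matrix n n ℂ)
    (P : Fin r → Matrix n n ℂ)
    (hherm : ∀ i, (P i)ᴴ = P i)
    (hsum : ∑ i, P i = 1) (hσ : σ.PosSemidef) :
    ((r : ℂ) • (∑ i, P i * σ * P i) - σ).PosSemidef := by
  simpa only [Fintype.card_fin] using hσ.card_smul_sum_mul_mul_sub hherm hsum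

open QD Matrix in
/-- pinching inequality `σ ≤ v(A) · Σᵢ Pᵢ σ Pᵢ` for the spectral
projections `P₁,…,P_r` of a self-adjoint `A` with `r` distinct eigenvalues. -/
theorem pinching_inequality
    {n : Type*} [Fintype n] [DecidableEq n] (r : ℕ) (A σ : Matrix n n ℂ)
    (P : Fin r → Matrix n n ℂ) (μ : Fin r → ℝ)
    (hherm : ∀ i, (P i)ᴴ = P i) (hidem : ∀ i, P i * P i = P i)
    (hne : ∀ i, P i ≠ 0) (horth : ∀ i j, i ≠ j → P i * P j = 0)
    (hsum : ∑ i, P i = 1) (hμ : Function.Injective μ)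
    (hA : A = ∑ i, (μ i : ℂ) • P i) (hσ : σ.PosSemidef) :
    ((r : ℂ) • (∑ i, P i * σ * P i) - σ).PosSemidef :=
  pinching_inequality_general r σ P hherm hsum hσ
end
end

section
/- Monotonicity of the sandwiched Rényi divergence in the second argument: for a quantum state ρ, positive semidefinite operators σ' ≥ σ, and α ≥ 1/2 with α ≠ 1, D*_α(ρ‖σ') ≤ D*_α(ρ‖σ). -/
open scoped Matrix ComplexOrder

noncomputable section
open Classical

namespace QDAux
open QD Matrix
variable {n : Type*} [Fintype n] [DecidableEq n] {A : Matrix n n ℂ} {f g : ℝ → ℝ}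

lemma mfun_of_isHermitian (hA : A.IsHermitian) (f : ℝ → ℝ) :
    mfun f A = (hA.eigenvectorUnitary : Matrix n n ℂ) *
      Matrix.diagonal (fun i => (f (hA.eigenvalues i) : ℂ)) *
      (star (hA.eigenvectorUnitary : Matrix n n ℂ)) := dif_pos hA

lemma mfun_isHermitian (hA : A.IsHermitian) (f : ℝ → ℝ) : (mfun f A).IsHermitian := by
  rw [mfun_of_isHermitian hA f]
  apply Matrix.isHermitian_mul_mul_conjTranspose
  exact Matrix.isHermitian_diagonal_of_self_adjoint _ (by
      funext i; simp [star, Complex.ext_iff])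

lemma mfun_mul (hA : A.IsHermitian) (f g : ℝ → ℝ) :
    mfun f A * mfun g A = mfun (fun x => f x * g x) A := by
  simp only [mfun_of_isHermitian hA]
  have h1 : (star (hA.eigenvectorUnitary : Matrix n n ℂ)) *
      (hA.eigenvectorUnitary : Matrix n n ℂ) = 1 := Unitary.coe_star_mul_self _
  have hd : (Matrix.diagonal (fun i => (f (hA.eigenvalues i) : ℂ))) *
      (Matrix.diagonal (fun i => (g (hA.eigenvalues i) : ℂ))) =
      Matrix.diagonal (fun i => ((f (hA.eigenvalues i) * g (hA.eigenvalues i) : ℝ) : ℂ)) := by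
    rw [Matrix.diagonal_mul_diagonal]
    congr 1; funext i; push_cast; ring
  simp only [Matrix.mul_assoc]
  rw [← Matrix.mul_assoc (star (hA.eigenvectorUnitary : Matrix n n ℂ))
    (hA.eigenvectorUnitary : Matrix n n ℂ), h1, one_mul,
    ← Matrix.mul_assoc (Matrix.diagonal _) (Matrix.diagonal _), hd]

lemma mfun_congr (hA : A.IsHermitian) {f g : ℝ → ℝ}
    (h : ∀ i, f (hA.eigenvalues i) = g (hA.eigenvalues i)) : mfun f A = mfun g A := by
  rw [mfun_of_isHermitian hA f, mfun_of_isHermitian hA g]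
  have : (fun i => ((f (hA.eigenvalues i) : ℝ) : ℂ)) = fun i => ((g (hA.eigenvalues i) : ℝ) : ℂ) := by
    funext i; rw [h i]
  rw [this]

lemma mfun_one (hA : A.IsHermitian) : mfun (fun _ => 1) A = 1 := by
  rw [mfun_of_isHermitian hA]
  simp only [Complex.ofReal_one, Matrix.diagonal_one, mul_one]
  exact Unitary.coe_mul_star_self _

lemma mfun_id (hA : A.IsHermitian) : mfun (fun x => x) A = A := by
  rw [mfun_of_isHermitian hA]
  exact hA.spectral_theorem.symm

lemma mfun_add (hA : A.IsHermitian) (f g : ℝ → ℝ) :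
    mfun (fun x => f x + g x) A = mfun f A + mfun g A := by
  simp only [mfun_of_isHermitian hA]
  have : (fun i => ((f (hA.eigenvalues i) + g (hA.eigenvalues i) : ℝ) : ℂ)) =
      (fun i => ((f (hA.eigenvalues i) : ℝ) : ℂ) + ((g (hA.eigenvalues i) : ℝ) : ℂ)) := by
    funext i; push_cast; simp
  rw [this, ← Matrix.diagonal_add, Matrix.mul_add, Matrix.add_mul]

lemma mfun_smul (hA : A.IsHermitian) (c : ℝ) (f : ℝ → ℝ) :
    mfun (fun x => c * f x) A = (c : ℂ) • mfun f A := by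
  simp only [mfun_of_isHermitian hA]
  have : (fun i => ((c * f (hA.eigenvalues i) : ℝ) : ℂ)) =
      (c : ℂ) • (fun i => ((f (hA.eigenvalues i) : ℝ) : ℂ)) := by
    funext i; push_cast; simp [Pi.smul_apply]
  rw [this, Matrix.diagonal_smul, Matrix.mul_smul, Matrix.smul_mul]

lemma trace_mfun (hA : A.IsHermitian) (f : ℝ → ℝ) :
    (mfun f A).trace = ((∑ i, f (hA.eigenvalues i) : ℝ) : ℂ) := by
  rw [mfun_of_isHermitian hA, Matrix.trace_mul_cycle, Unitary.coe_star_mul_self, one_mul,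
    Matrix.trace_diagonal]
  push_cast; rfl


lemma qf_conj (B C : Matrix n n ℂ) (v : n → ℂ) :
    star v ⬝ᵥ (Bᴴ * C * B) *ᵥ v = star (B *ᵥ v) ⬝ᵥ C *ᵥ (B *ᵥ v) := by
  rw [Matrix.star_mulVec, ← Matrix.dotProduct_mulVec, Matrix.mulVec_mulVec,
    Matrix.mulVec_mulVec]

lemma qf_diagonal (d : n → ℝ) (w : n → ℂ) :
    star w ⬝ᵥ (Matrix.diagonal (fun i => (d i : ℂ))) *ᵥ w
      = ((∑ i, d i * Complex.normSq (w i) : ℝ) : ℂ) := by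
  push_cast
  simp only [dotProduct, Matrix.mulVec_diagonal, Pi.star_apply]
  refine Finset.sum_congr rfl fun i _ => ?_
  have : star (w i) * w i = (Complex.normSq (w i) : ℂ) := by
    rw [Complex.star_def, mul_comm, Complex.mul_conj]
  calc star (w i) * ((d i : ℂ) * w i) = (d i : ℂ) * (star (w i) * w i) := by ring
    _ = _ := by rw [this]

lemma qf_mfun (hA : A.IsHermitian) (f : ℝ → ℝ) (v : n → ℂ) :
    star v ⬝ᵥ (mfun f A) *ᵥ v =
      ((∑ i, f (hA.eigenvalues i) *
        Complex.normSq ((star (hA.eigenvectorUnitary : Matrix n n ℂ) *ᵥ v) i) : ℝ) : ℂ) := by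
  have hU : ((star (hA.eigenvectorUnitary : Matrix n n ℂ))ᴴ : Matrix n n ℂ)
      = (hA.eigenvectorUnitary : Matrix n n ℂ) := by
    rw [← Matrix.star_eq_conjTranspose, star_star]
  have : mfun f A = (star (hA.eigenvectorUnitary : Matrix n n ℂ))ᴴ *
      Matrix.diagonal (fun i => ((f (hA.eigenvalues i) : ℝ) : ℂ)) *
      (star (hA.eigenvectorUnitary : Matrix n n ℂ)) := by
    rw [mfun_of_isHermitian hA, hU]
  rw [this, qf_conj, qf_diagonal]

lemma re_qf_mfun (hA : A.IsHermitian) (f : ℝ → ℝ) (v : n → ℂ) :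
    (star v ⬝ᵥ (mfun f A) *ᵥ v).re =
      ∑ i, f (hA.eigenvalues i) *
        Complex.normSq ((star (hA.eigenvectorUnitary : Matrix n n ℂ) *ᵥ v) i) := by
  rw [qf_mfun hA f v, Complex.ofReal_re]

lemma mfun_posSemidef (hA : A.IsHermitian) {f : ℝ → ℝ}
    (hf : ∀ i, 0 ≤ f (hA.eigenvalues i)) : (mfun f A).PosSemidef := by
  refine Matrix.PosSemidef.of_dotProduct_mulVec_nonneg (mfun_isHermitian hA f) fun v => ?_
  rw [qf_mfun hA f v]
  rw [Complex.zero_le_real]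
  exact Finset.sum_nonneg fun i _ => mul_nonneg (hf i) (Complex.normSq_nonneg _)

lemma mfun_sub (hA : A.IsHermitian) (f g : ℝ → ℝ) :
    mfun (fun x => f x - g x) A = mfun f A - mfun g A := by
  have h := mfun_add hA (fun x => f x - g x) g
  simp only [sub_add_cancel] at h
  rw [h]; abel

lemma mfun_loewner (hA : A.IsHermitian) {f g : ℝ → ℝ}
    (h : ∀ i, f (hA.eigenvalues i) ≤ g (hA.eigenvalues i)) :
    (mfun g A - mfun f A).PosSemidef := by
  rw [← mfun_sub hA g f]
  exact mfun_posSemidef hA fun i => sub_nonneg.mpr (h i)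

lemma star_mul_self_mul_eq_diagonal' (hA : A.IsHermitian) :
    star (hA.eigenvectorUnitary : Matrix n n ℂ) * A * (hA.eigenvectorUnitary : Matrix n n ℂ)
      = Matrix.diagonal (RCLike.ofReal ∘ hA.eigenvalues) := by
  have h := hA.conjStarAlgAut_star_eigenvectorUnitary
  rwa [Unitary.conjStarAlgAut_apply, Unitary.coe_star, star_star] at h

lemma trace_eq_sum_diag_conj {U : Matrix n n ℂ} (hU : U ∈ Matrix.unitaryGroup n ℂ)
    (M : Matrix n n ℂ) : M.trace = ∑ i, (star U * M * U) i i := by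
  have h : (star U * M * U).trace = M.trace := by
    rw [Matrix.trace_mul_cycle, Matrix.mem_unitaryGroup_iff.mp hU, one_mul]
  rw [← h]; rfl

lemma diag_conj_eq_qf (U M : Matrix n n ℂ) (i : n) :
    (star U * M * U) i i = star (fun k => U k i) ⬝ᵥ M *ᵥ (fun k => U k i) := by
  simp only [Matrix.mul_apply, dotProduct, Matrix.mulVec, Pi.star_apply,
    Matrix.star_apply, Finset.sum_mul, Finset.mul_sum, Matrix.star_eq_conjTranspose,
    Matrix.conjTranspose_apply]
  rw [Finset.sum_comm]
  refine Finset.sum_congr rfl fun j _ => Finset.sum_congr rfl fun k _ => by ring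


lemma aeval_conj {U : Matrix n n ℂ} (hU : U ∈ Matrix.unitaryGroup n ℂ)
    (M : Matrix n n ℂ) (p : Polynomial ℂ) :
    Polynomial.aeval (U * M * star U) p = U * Polynomial.aeval M p * star U := by
  have hUU : U * star U = 1 := Matrix.mem_unitaryGroup_iff.mp hU
  have hUU' : star U * U = 1 := Matrix.mem_unitaryGroup_iff'.mp hU
  induction p using Polynomial.induction_on' with
  | add p q hp hq => simp [hp, hq, Matrix.mul_add, Matrix.add_mul]
  | monomial k c =>
      simp only [Polynomial.aeval_monomial]
      have hpow : (U * M * star U) ^ k = U * M ^ k * star U := by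
        induction k with
        | zero => simp [hUU]
        | succ m ih =>
            rw [pow_succ, ih, pow_succ]
            calc U * M ^ m * star U * (U * M * star U)
                = U * M ^ m * (star U * U) * M * star U := by
                  simp only [Matrix.mul_assoc]
              _ = U * (M ^ m * M) * star U := by rw [hUU']; simp only [Matrix.mul_assoc, Matrix.one_mul]
      rw [hpow]
      have h1 : (algebraMap ℂ (Matrix n n ℂ)) c * star U
          = star U * (algebraMap ℂ (Matrix n n ℂ)) c := Algebra.commutes c (star U)
      rw [Algebra.commutes c (U * M ^ k * star U), Algebra.commutes c (M ^ k)]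
      simp only [Matrix.mul_assoc]
      rw [h1]

lemma aeval_diagonal (d : n → ℂ) (p : Polynomial ℂ) :
    Polynomial.aeval (Matrix.diagonal d) p = Matrix.diagonal (fun i => p.eval (d i)) := by
  induction p using Polynomial.induction_on' with
  | add p q hp hq => simp [hp, hq, Matrix.diagonal_add]
  | monomial k c =>
      simp only [Polynomial.aeval_monomial, Polynomial.eval_monomial]
      rw [Matrix.diagonal_pow]
      have : (algebraMap ℂ (Matrix n n ℂ)) c = Matrix.diagonal (fun _ => c) := by
        rw [Matrix.algebraMap_eq_diagonal]; rfl
      rw [this, Matrix.diagonal_mul_diagonal]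
      congr 1

lemma mfun_eq_aeval (hA : A.IsHermitian) (f : ℝ → ℝ) (p : Polynomial ℝ)
    (hp : ∀ i, p.eval (hA.eigenvalues i) = f (hA.eigenvalues i)) :
    mfun f A = Polynomial.aeval A (p.map (algebraMap ℝ ℂ)) := by
  conv_rhs => rw [hA.spectral_theorem, Unitary.conjStarAlgAut_apply]
  rw [aeval_conj (hA.eigenvectorUnitary).2, aeval_diagonal]
  have hfun : (fun i => ((f (hA.eigenvalues i) : ℝ) : ℂ)) =
      fun i => (p.map (algebraMap ℝ ℂ)).eval ((RCLike.ofReal ∘ hA.eigenvalues) i) := by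
    funext i
    rw [Function.comp_apply, Polynomial.eval_map,
      show (RCLike.ofReal (hA.eigenvalues i) : ℂ) = algebraMap ℝ ℂ (hA.eigenvalues i) from rfl,
      Polynomial.eval₂_hom, hp i]
    rfl
  rw [mfun_of_isHermitian hA, hfun]


lemma mfun_unitary_conj {U : Matrix n n ℂ} (hU : U ∈ Matrix.unitaryGroup n ℂ) (d : n → ℝ)
    (hA : A.IsHermitian) (hAd : A = U * Matrix.diagonal (fun i => (d i : ℂ)) * star U)
    (f : ℝ → ℝ) :
    mfun f A = U * Matrix.diagonal (fun i => (f (d i) : ℂ)) * star U := by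
  set s : Finset ℝ := (Finset.univ.image hA.eigenvalues) ∪ (Finset.univ.image d) with hs
  set p := Lagrange.interpolate s id f with hpdef
  have hnode : ∀ x ∈ s, p.eval x = f x := fun x hx => by
    simpa [hpdef] using Lagrange.eval_interpolate_at_node f (Set.injOn_id _) hx
  have h1 : mfun f A = Polynomial.aeval A (p.map (algebraMap ℝ ℂ)) :=
    mfun_eq_aeval hA f p (fun i => hnode _ (by simp [hs]))
  rw [h1, hAd, aeval_conj hU, aeval_diagonal]
  have hfun : (fun i => (p.map (algebraMap ℝ ℂ)).eval ((d i : ℝ) : ℂ)) =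
      (fun i => ((f (d i) : ℝ) : ℂ)) := by
    funext i
    rw [Polynomial.eval_map,
      show ((d i : ℝ) : ℂ) = algebraMap ℝ ℂ (d i) from rfl,
      Polynomial.eval₂_hom, hnode _ (by simp [hs])]
    rfl
  rw [hfun]

lemma conjT_mul_pow_comm (X : Matrix n n ℂ) (k : ℕ) :
    Xᴴ * (X * Xᴴ) ^ k = (Xᴴ * X) ^ k * Xᴴ := by
  induction k with
  | zero => simp
  | succ m ih =>
      rw [pow_succ, pow_succ, ← Matrix.mul_assoc, ih]
      simp only [Matrix.mul_assoc]

lemma aeval_comm_conjT (X : Matrix n n ℂ) (r : Polynomial ℂ) :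
    Xᴴ * Polynomial.aeval (X * Xᴴ) r = Polynomial.aeval (Xᴴ * X) r * Xᴴ := by
  induction r using Polynomial.induction_on' with
  | add p q hp hq => simp [Matrix.mul_add, Matrix.add_mul, hp, hq]
  | monomial k c =>
      simp only [Polynomial.aeval_monomial]
      rw [Algebra.commutes c ((X * Xᴴ) ^ k), Algebra.commutes c ((Xᴴ * X) ^ k)]
      rw [← Matrix.mul_assoc, conjT_mul_pow_comm]
      simp only [Matrix.mul_assoc]
      rw [Algebra.commutes c Xᴴ]

lemma trace_mfun_swap (X : Matrix n n ℂ) (f : ℝ → ℝ) (hf0 : f 0 = 0) :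
    (mfun f (X * Xᴴ)).trace = (mfun f (Xᴴ * X)).trace := by
  have hA : (X * Xᴴ).PosSemidef := Matrix.posSemidef_self_mul_conjTranspose X
  have hB : (Xᴴ * X).PosSemidef := Matrix.posSemidef_conjTranspose_mul_self X
  set s : Finset ℝ := insert 0 ((Finset.univ.image hA.1.eigenvalues) ∪
    (Finset.univ.image hB.1.eigenvalues)) with hs
  set p := Lagrange.interpolate s id f with hpdef
  have hnode : ∀ x ∈ s, p.eval x = f x := fun x hx => by
    simpa [hpdef] using Lagrange.eval_interpolate_at_node f (Set.injOn_id _) hx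
  have hp0 : p.coeff 0 = 0 := by
    rw [Polynomial.coeff_zero_eq_eval_zero, hnode 0 (by simp [hs]), hf0]
  obtain ⟨r, hr⟩ : Polynomial.X ∣ p := Polynomial.X_dvd_iff.mpr hp0
  have h1 : mfun f (X * Xᴴ) = Polynomial.aeval (X * Xᴴ) (p.map (algebraMap ℝ ℂ)) :=
    mfun_eq_aeval hA.1 f p (fun i => hnode _ (by simp [hs]))
  have h2 : mfun f (Xᴴ * X) = Polynomial.aeval (Xᴴ * X) (p.map (algebraMap ℝ ℂ)) :=
    mfun_eq_aeval hB.1 f p (fun i => hnode _ (by simp [hs]))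
  rw [h1, h2, hr]
  simp only [Polynomial.map_mul, Polynomial.map_X, _root_.map_mul, Polynomial.aeval_X]
  set R := Polynomial.aeval (X * Xᴴ) (r.map (algebraMap ℝ ℂ)) with hR
  set R' := Polynomial.aeval (Xᴴ * X) (r.map (algebraMap ℝ ℂ)) with hR'
  have hcomm : Xᴴ * R = R' * Xᴴ := aeval_comm_conjT X _
  calc (X * Xᴴ * R).trace = (X * (Xᴴ * R)).trace := by rw [Matrix.mul_assoc]
    _ = (X * (R' * Xᴴ)).trace := by rw [hcomm]
    _ = ((X * R') * Xᴴ).trace := by rw [Matrix.mul_assoc]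
    _ = (Xᴴ * (X * R')).trace := by rw [Matrix.trace_mul_comm]
    _ = (Xᴴ * X * R').trace := by rw [Matrix.mul_assoc]


lemma unit_column {U : Matrix n n ℂ} (hU : U ∈ Matrix.unitaryGroup n ℂ) (i : n) :
    star (fun k => U k i) ⬝ᵥ (fun k => U k i) = 1 := by
  have h := diag_conj_eq_qf U 1 i
  rw [Matrix.mul_one, Matrix.mem_unitaryGroup_iff'.mp hU, Matrix.one_mulVec] at h
  rw [← h, Matrix.one_apply_eq]

lemma jensen_convex {N : Matrix n n ℂ} (hN : N.PosSemidef) {g : ℝ → ℝ}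
    (hg : ConvexOn ℝ (Set.Ici 0) g) {v : n → ℂ} (hv : star v ⬝ᵥ v = 1) :
    g ((star v ⬝ᵥ N *ᵥ v).re) ≤ (star v ⬝ᵥ (mfun g N) *ᵥ v).re := by
  have hherm := hN.1
  set w := star (hherm.eigenvectorUnitary : Matrix n n ℂ) *ᵥ v with hwdef
  have h1 : (star v ⬝ᵥ N *ᵥ v).re = ∑ j, hherm.eigenvalues j * Complex.normSq (w j) := by
    conv_lhs => rw [← mfun_id hherm]
    exact re_qf_mfun hherm _ v
  have h2 := re_qf_mfun hherm g v
  have hw : ∑ j, Complex.normSq (w j) = 1 := by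
    have h3 := qf_mfun hherm (fun _ => 1) v
    rw [mfun_one hherm, Matrix.one_mulVec, hv] at h3
    have h4 := congrArg Complex.re h3
    simp only [Complex.one_re, Complex.ofReal_re, one_mul] at h4
    exact h4.symm
  rw [h1, h2]
  have hle := hg.map_sum_le (t := Finset.univ)
    (w := fun j => Complex.normSq (w j)) (p := fun j => hherm.eigenvalues j)
    (fun j _ => Complex.normSq_nonneg _) hw (fun j _ => hN.eigenvalues_nonneg j)
  calc g (∑ j, hherm.eigenvalues j * Complex.normSq (w j))
      = g (∑ j, Complex.normSq (w j) • hherm.eigenvalues j) := by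
        congr 1; exact Finset.sum_congr rfl fun j _ => by rw [smul_eq_mul, mul_comm]
    _ ≤ ∑ j, Complex.normSq (w j) • g (hherm.eigenvalues j) := hle
    _ = ∑ j, g (hherm.eigenvalues j) * Complex.normSq (w j) :=
        Finset.sum_congr rfl fun j _ => by rw [smul_eq_mul, mul_comm]

lemma jensen_concave {N : Matrix n n ℂ} (hN : N.PosSemidef) {g : ℝ → ℝ}
    (hg : ConcaveOn ℝ (Set.Ici 0) g) {v : n → ℂ} (hv : star v ⬝ᵥ v = 1) :
    (star v ⬝ᵥ (mfun g N) *ᵥ v).re ≤ g ((star v ⬝ᵥ N *ᵥ v).re) := by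
  have hherm := hN.1
  set w := star (hherm.eigenvectorUnitary : Matrix n n ℂ) *ᵥ v with hwdef
  have h1 : (star v ⬝ᵥ N *ᵥ v).re = ∑ j, hherm.eigenvalues j * Complex.normSq (w j) := by
    conv_lhs => rw [← mfun_id hherm]
    exact re_qf_mfun hherm _ v
  have h2 := re_qf_mfun hherm g v
  have hw : ∑ j, Complex.normSq (w j) = 1 := by
    have h3 := qf_mfun hherm (fun _ => 1) v
    rw [mfun_one hherm, Matrix.one_mulVec, hv] at h3
    have h4 := congrArg Complex.re h3
    simp only [Complex.one_re, Complex.ofReal_re, one_mul] at h4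
    exact h4.symm
  rw [h1, h2]
  have hle := hg.le_map_sum (t := Finset.univ)
    (w := fun j => Complex.normSq (w j)) (p := fun j => hherm.eigenvalues j)
    (fun j _ => Complex.normSq_nonneg _) hw (fun j _ => hN.eigenvalues_nonneg j)
  calc ∑ j, g (hherm.eigenvalues j) * Complex.normSq (w j)
      = ∑ j, Complex.normSq (w j) • g (hherm.eigenvalues j) :=
        Finset.sum_congr rfl fun j _ => by rw [smul_eq_mul, mul_comm]
    _ ≤ g (∑ j, Complex.normSq (w j) • hherm.eigenvalues j) := hle
    _ = g (∑ j, hherm.eigenvalues j * Complex.normSq (w j)) := by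
        congr 1; exact Finset.sum_congr rfl fun j _ => by rw [smul_eq_mul, mul_comm]

lemma re_qf_loewner {A B : Matrix n n ℂ} (hAB : (B - A).PosSemidef) (v : n → ℂ) :
    (star v ⬝ᵥ A *ᵥ v).re ≤ (star v ⬝ᵥ B *ᵥ v).re := by
  have h0 := hAB.re_dotProduct_nonneg v
  rw [Matrix.sub_mulVec, dotProduct_sub] at h0
  simp only [RCLike.re_to_complex, Complex.sub_re] at h0
  linarith

lemma trace_mfun_mono_convex {A B : Matrix n n ℂ} (hA : A.PosSemidef) (hB : B.PosSemidef)
    (hAB : (B - A).PosSemidef) {g : ℝ → ℝ} (hg : ConvexOn ℝ (Set.Ici 0) g)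
    (hmono : MonotoneOn g (Set.Ici 0)) :
    ((mfun g A).trace).re ≤ ((mfun g B).trace).re := by
  have hAh := hA.1
  set U := (hAh.eigenvectorUnitary : Matrix n n ℂ) with hUdef
  have hUmem := (hAh.eigenvectorUnitary).2
  rw [trace_mfun hAh g, Complex.ofReal_re]
  have hR : ((mfun g B).trace).re
      = ∑ i, (star (fun k => U k i) ⬝ᵥ (mfun g B) *ᵥ (fun k => U k i)).re := by
    rw [trace_eq_sum_diag_conj hUmem (mfun g B), Complex.re_sum]
    exact Finset.sum_congr rfl fun i _ => by rw [diag_conj_eq_qf]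
  rw [hR]
  refine Finset.sum_le_sum fun i _ => ?_
  have hcol : star (fun k => U k i) ⬝ᵥ (fun k => U k i) = 1 := unit_column hUmem i
  have hqA : (star (fun k => U k i) ⬝ᵥ A *ᵥ (fun k => U k i)).re = hAh.eigenvalues i := by
    rw [← diag_conj_eq_qf, star_mul_self_mul_eq_diagonal' hAh]
    simp [Matrix.diagonal_apply_eq]
  have hle : hAh.eigenvalues i ≤ (star (fun k => U k i) ⬝ᵥ B *ᵥ (fun k => U k i)).re := by
    rw [← hqA]; exact re_qf_loewner hAB _
  have hjen := jensen_convex hB hg hcol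
  refine le_trans ?_ hjen
  exact hmono (hA.eigenvalues_nonneg i) (le_trans (hA.eigenvalues_nonneg i) hle) hle

lemma trace_mfun_mono_concave {A B : Matrix n n ℂ} (hA : A.PosSemidef) (hB : B.PosSemidef)
    (hAB : (B - A).PosSemidef) {g : ℝ → ℝ} (hg : ConcaveOn ℝ (Set.Ici 0) g)
    (hmono : MonotoneOn g (Set.Ici 0)) :
    ((mfun g A).trace).re ≤ ((mfun g B).trace).re := by
  have hBh := hB.1
  set U := (hBh.eigenvectorUnitary : Matrix n n ℂ) with hUdef
  have hUmem := (hBh.eigenvectorUnitary).2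
  rw [trace_mfun hBh g, Complex.ofReal_re]
  have hL : ((mfun g A).trace).re
      = ∑ i, (star (fun k => U k i) ⬝ᵥ (mfun g A) *ᵥ (fun k => U k i)).re := by
    rw [trace_eq_sum_diag_conj hUmem (mfun g A), Complex.re_sum]
    exact Finset.sum_congr rfl fun i _ => by rw [diag_conj_eq_qf]
  rw [hL]
  refine Finset.sum_le_sum fun i _ => ?_
  have hcol : star (fun k => U k i) ⬝ᵥ (fun k => U k i) = 1 := unit_column hUmem i
  have hqB : (star (fun k => U k i) ⬝ᵥ B *ᵥ (fun k => U k i)).re = hBh.eigenvalues i := by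
    rw [← diag_conj_eq_qf, star_mul_self_mul_eq_diagonal' hBh]
    simp [Matrix.diagonal_apply_eq]
  have hle : (star (fun k => U k i) ⬝ᵥ A *ᵥ (fun k => U k i)).re ≤ hBh.eigenvalues i := by
    rw [← hqB]; exact re_qf_loewner hAB _
  have hjen := jensen_concave hA hg hcol
  refine hjen.trans ?_
  have h0 : (0:ℝ) ≤ (star (fun k => U k i) ⬝ᵥ A *ᵥ (fun k => U k i)).re := by
    have := hA.re_dotProduct_nonneg (fun k => U k i)
    simpa [RCLike.re_to_complex] using this
  exact hmono h0 (le_trans h0 hle) hle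


open MeasureTheory in
lemma integrable_res_kernel {t : ℝ} (ht0 : 0 < t) (ht1 : t < 1) {x : ℝ} (hx : 0 ≤ x) :
    IntegrableOn (fun l => x / (x + l) * l ^ (t - 1)) (Set.Ioi (0:ℝ)) := by
  have hcont : ContinuousOn (fun l => x / (x + l) * l ^ (t - 1)) (Set.Ioi (0:ℝ)) := by
    intro l hl
    rw [Set.mem_Ioi] at hl
    have h1 : ContinuousAt (fun l : ℝ => x / (x + l)) l :=
      (continuousAt_const.div (continuousAt_const.add continuousAt_id) (by positivity))
    have h2 : ContinuousAt (fun l : ℝ => l ^ (t - 1)) l :=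
      Real.continuousAt_rpow_const l (t-1) (Or.inl hl.ne')
    exact (h1.mul h2).continuousWithinAt
  have hsplit : Set.Ioi (0:ℝ) = Set.Ioc (0:ℝ) 1 ∪ Set.Ioi (1:ℝ) :=
    (Set.Ioc_union_Ioi_eq_Ioi (by norm_num)).symm
  rw [hsplit]
  apply IntegrableOn.union
  · -- on Ioc 0 1, dominate by l ^ (t-1)
    have hbase : IntegrableOn (fun l : ℝ => l ^ (t - 1)) (Set.Ioc (0:ℝ) 1) := by
      have := intervalIntegral.intervalIntegrable_rpow' (a := 0) (b := 1)
        (r := t - 1) (by linarith)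
      rwa [intervalIntegrable_iff, Set.uIoc_of_le (by norm_num : (0:ℝ) ≤ 1)] at this
    refine hbase.mono' ?_ ?_
    · exact (hcont.mono (by intro y hy; exact Set.mem_Ioi.mpr hy.1)).aestronglyMeasurable
        measurableSet_Ioc
    · refine (ae_restrict_iff' measurableSet_Ioc).mpr (Filter.Eventually.of_forall ?_)
      intro l hl
      have hl0 : 0 < l := hl.1
      have hfrac : x / (x + l) ≤ 1 := by
        apply div_le_one_of_le₀ <;> nlinarith
      have h1 : 0 ≤ l ^ (t - 1) := Real.rpow_nonneg hl0.le _
      have h2 : 0 ≤ x / (x + l) := by positivity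
      rw [Real.norm_eq_abs, abs_of_nonneg (by positivity)]
      nlinarith
  · -- on Ioi 1, dominate by x * l ^ (t-2)
    have hbase : IntegrableOn (fun l : ℝ => x * l ^ (t - 2)) (Set.Ioi (1:ℝ)) :=
      (integrableOn_Ioi_rpow_of_lt (by linarith) one_pos).const_mul x
    refine hbase.mono' ?_ ?_
    · exact (hcont.mono (by intro y hy; rw [Set.mem_Ioi] at hy ⊢; linarith)).aestronglyMeasurable
        measurableSet_Ioi
    · refine (ae_restrict_iff' measurableSet_Ioi).mpr (Filter.Eventually.of_forall ?_)
      intro l hl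
      rw [Set.mem_Ioi] at hl
      have hl0 : (0:ℝ) < l := by linarith
      have h1 : 0 ≤ l ^ (t - 1) := Real.rpow_nonneg hl0.le _
      rw [Real.norm_eq_abs, abs_of_nonneg (by positivity)]
      have hfrac : x / (x + l) ≤ x / l := by
        rw [div_le_div_iff₀ (by positivity) hl0]
        nlinarith
      have hrw : x * l ^ (t - 2) = (x / l) * l ^ (t - 1) := by
        rw [show t - 2 = (t - 1) - 1 by ring, Real.rpow_sub hl0, Real.rpow_one]
        field_simp
      rw [hrw]
      exact mul_le_mul_of_nonneg_right hfrac h1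


/-- The Löwner–Heinz normalization constant. -/
def lhC (t : ℝ) : ℝ := ∫ l in Set.Ioi (0:ℝ), 1 / (1 + l) * l ^ (t - 1)

open MeasureTheory in
lemma lhC_integrable {t : ℝ} (ht0 : 0 < t) (ht1 : t < 1) :
    IntegrableOn (fun l => (1:ℝ) / (1 + l) * l ^ (t - 1)) (Set.Ioi (0:ℝ)) := by
  simpa using integrable_res_kernel ht0 ht1 (zero_le_one (α := ℝ))

open MeasureTheory in
lemma lhC_pos {t : ℝ} (ht0 : 0 < t) (ht1 : t < 1) : 0 < lhC t := by
  rw [lhC, setIntegral_pos_iff_support_of_nonneg_ae ?hae (lhC_integrable ht0 ht1)]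
  case hae =>
    refine (ae_restrict_iff' measurableSet_Ioi).mpr (Filter.Eventually.of_forall ?_)
    intro l hl
    rw [Set.mem_Ioi] at hl
    have : 0 ≤ l ^ (t - 1) := Real.rpow_nonneg hl.le _
    have h1 : (0:ℝ) < 1 + l := by linarith
    positivity
  have hsub : Set.Ioi (0:ℝ) ⊆ Function.support (fun l => (1:ℝ) / (1 + l) * l ^ (t - 1)) := by
    intro l hl
    rw [Set.mem_Ioi] at hl
    have h1 : (0:ℝ) < 1 + l := by linarith
    have h2 : 0 < l ^ (t - 1) := Real.rpow_pos_of_pos hl _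
    exact Function.mem_support.mpr (by positivity)
  have : Function.support (fun l => (1:ℝ) / (1 + l) * l ^ (t - 1)) ∩ Set.Ioi 0
      = Set.Ioi (0:ℝ) := Set.inter_eq_self_of_subset_right hsub
  rw [this, Real.volume_Ioi]
  exact ENNReal.zero_lt_top

open MeasureTheory in
lemma integral_res_kernel {t : ℝ} (ht0 : 0 < t) (ht1 : t < 1) {x : ℝ} (hx : 0 ≤ x) :
    ∫ l in Set.Ioi (0:ℝ), x / (x + l) * l ^ (t - 1) = lhC t * x ^ t := by
  rcases eq_or_lt_of_le hx with h0 | hxpos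
  · rw [← h0]
    simp only [zero_div, zero_mul, Real.rpow_natCast]
    rw [Real.zero_rpow ht0.ne', mul_zero]
    simp
  · have hsub := MeasureTheory.integral_comp_mul_left_Ioi
      (fun l => x / (x + l) * l ^ (t - 1)) 0 hxpos
    rw [mul_zero] at hsub
    have hcong : ∀ u ∈ Set.Ioi (0:ℝ),
        x / (x + x * u) * (x * u) ^ (t - 1) = x ^ (t - 1) * (1 / (1 + u) * u ^ (t - 1)) := by
      intro u hu
      rw [Set.mem_Ioi] at hu
      rw [Real.mul_rpow hxpos.le hu.le]
      have h1u : (0:ℝ) < 1 + u := by linarith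
      field_simp
    rw [setIntegral_congr_fun measurableSet_Ioi hcong, integral_const_mul] at hsub
    rw [smul_eq_mul] at hsub
    have hmul := congrArg (fun z => x * z) hsub
    simp only [← mul_assoc, mul_inv_cancel₀ hxpos.ne', one_mul] at hmul
    have hxx : x * x ^ (t - 1) = x ^ t := by
      have h := Real.rpow_add hxpos 1 (t - 1)
      rw [Real.rpow_one] at h
      rw [← h, show (1:ℝ) + (t - 1) = t by ring]
    beta_reduce at hmul
    rw [lhC, ← hmul, hxx]
    ring


lemma mfun_const (hA : A.IsHermitian) (c : ℝ) :
    mfun (fun _ => c) A = (c : ℂ) • (1 : Matrix n n ℂ) := by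
  have h1 : mfun (fun _ => c) A = mfun (fun x => c * 1) A := by
    apply mfun_congr hA; intro i; ring
  rw [h1, mfun_smul hA c (fun _ => 1), mfun_one hA]

lemma mfun_shift (hA : A.IsHermitian) (c : ℝ) :
    mfun (fun x => x + c) A = A + (c : ℂ) • (1 : Matrix n n ℂ) := by
  rw [mfun_add hA (fun x => x) (fun _ => c), mfun_id hA, mfun_const hA]

lemma smul_one_diag (c : ℝ) :
    (c : ℂ) • (1 : Matrix n n ℂ) = Matrix.diagonal (fun _ => (c:ℂ)) := by
  ext i j
  by_cases h : i = j <;>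
    simp [Matrix.smul_apply, Matrix.one_apply, Matrix.diagonal_apply, h]

lemma smul_one_posSemidef {c : ℝ} (hc : 0 ≤ c) :
    ((c : ℂ) • (1 : Matrix n n ℂ)).PosSemidef := by
  rw [smul_one_diag]
  exact Matrix.PosSemidef.diagonal (fun i => by
    simpa using Complex.zero_le_real.mpr hc)

lemma smul_one_posDef {c : ℝ} (hc : 0 < c) :
    ((c : ℂ) • (1 : Matrix n n ℂ)).PosDef := by
  rw [smul_one_diag]
  exact Matrix.posDef_diagonal_iff.mpr (fun i => by
    simpa using Complex.zero_lt_real.mpr hc)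

lemma conj_loewner {A B X : Matrix n n ℂ} (hAB : (B - A).PosSemidef) :
    (Xᴴ * B * X - Xᴴ * A * X).PosSemidef := by
  have h : Xᴴ * B * X - Xᴴ * A * X = Xᴴ * (B - A) * X := by
    rw [Matrix.mul_sub, Matrix.sub_mul]
  rw [h]
  exact hAB.conjTranspose_mul_mul_same X

lemma eigenvalues_le_one_of_le_one {T : Matrix n n ℂ} (hT : T.IsHermitian)
    (h1 : ((1 : Matrix n n ℂ) - T).PosSemidef) (i : n) : hT.eigenvalues i ≤ 1 := by
  set U := (hT.eigenvectorUnitary : Matrix n n ℂ) with hU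
  have hUmem := (hT.eigenvectorUnitary).2
  have hqT : (star (fun k => U k i) ⬝ᵥ T *ᵥ (fun k => U k i)).re = hT.eigenvalues i := by
    rw [← diag_conj_eq_qf, star_mul_self_mul_eq_diagonal' hT]
    simp [Matrix.diagonal_apply_eq]
  have hle := re_qf_loewner h1 (fun k => U k i)
  rw [hqT, Matrix.one_mulVec, unit_column hUmem i] at hle
  simpa using hle

set_option maxHeartbeats 1600000 in
/-- Antitonicity of the resolvent: `σ ≤ σ'` implies `(σ' + l)⁻¹ ≤ (σ + l)⁻¹`. -/
lemma resolvent_antitone {σ σ' : Matrix n n ℂ} (hσ : σ.PosSemidef) (hσ' : σ'.PosSemidef)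
    (hle : (σ' - σ).PosSemidef) {l : ℝ} (hl : 0 < l) :
    (mfun (fun x => (x + l)⁻¹) σ - mfun (fun x => (x + l)⁻¹) σ').PosSemidef := by
  have hσh := hσ.1
  have hσ'h := hσ'.1
  set sq : ℝ → ℝ := fun x => Real.sqrt (x + l) with hsq
  set isq : ℝ → ℝ := fun x => (Real.sqrt (x + l))⁻¹ with hisq
  set P := mfun isq σ' with hPdef
  set Q := mfun sq σ' with hQdef
  have hposσ' : ∀ i, 0 < hσ'h.eigenvalues i + l :=
    fun i => by have := hσ'.eigenvalues_nonneg i; linarith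
  have hposσ : ∀ i, 0 < hσh.eigenvalues i + l :=
    fun i => by have := hσ.eigenvalues_nonneg i; linarith
  have hPherm : P.IsHermitian := mfun_isHermitian hσ'h isq
  have hQherm : Q.IsHermitian := mfun_isHermitian hσ'h sq
  have hPQ : P * Q = 1 := by
    rw [hPdef, hQdef, mfun_mul hσ'h]
    rw [mfun_congr hσ'h (g := fun _ => 1) (fun i => by
      simp only [hisq, hsq]
      rw [inv_mul_cancel₀ (Real.sqrt_ne_zero'.mpr (hposσ' i))])]
    exact mfun_one hσ'h
  have hQP : Q * P = 1 := by
    rw [hQdef, hPdef, mfun_mul hσ'h]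
    rw [mfun_congr hσ'h (g := fun _ => 1) (fun i => by
      simp only [hisq, hsq]
      rw [mul_inv_cancel₀ (Real.sqrt_ne_zero'.mpr (hposσ' i))])]
    exact mfun_one hσ'h
  set J := mfun (fun x => (x + l)⁻¹) σ with hJdef
  set J' := mfun (fun x => (x + l)⁻¹) σ' with hJ'def
  set T := P * (σ + (l:ℂ) • (1 : Matrix n n ℂ)) * P with hTdef
  have hσl : (σ + (l:ℂ) • (1 : Matrix n n ℂ)).PosSemidef :=
    hσ.add (smul_one_posSemidef hl.le)
  have hσlpd : (σ + (l:ℂ) • (1 : Matrix n n ℂ)).PosDef :=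
    Matrix.PosDef.posSemidef_add hσ (smul_one_posDef hl)
  have hσ'l : σ' + (l:ℂ) • (1 : Matrix n n ℂ) = mfun (fun x => x + l) σ' :=
    (mfun_shift hσ'h l).symm
  have hσl' : σ + (l:ℂ) • (1 : Matrix n n ℂ) = mfun (fun x => x + l) σ :=
    (mfun_shift hσh l).symm
  have hTpsd : T.PosSemidef := by
    have h := hσl.mul_mul_conjTranspose_same P
    rwa [hPherm.eq] at h
  have hTherm := hTpsd.1
  have hPMP : P * (σ' + (l:ℂ) • (1 : Matrix n n ℂ)) * P = 1 := by
    rw [hσ'l, hPdef, mfun_mul hσ'h, mfun_mul hσ'h]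
    rw [mfun_congr hσ'h (g := fun _ => 1) (fun i => by
      have h0 := hposσ' i
      have hsne : Real.sqrt (hσ'h.eigenvalues i + l) ≠ 0 := Real.sqrt_ne_zero'.mpr h0
      simp only [hisq]
      rw [show hσ'h.eigenvalues i + l
          = Real.sqrt (hσ'h.eigenvalues i + l) * Real.sqrt (hσ'h.eigenvalues i + l)
        from (Real.mul_self_sqrt h0.le).symm]
      field_simp
      rw [Real.sqrt_sq (Real.sqrt_nonneg _)])]
    exact mfun_one hσ'h
  have hT1 : ((1 : Matrix n n ℂ) - T).PosSemidef := by
    have heq : (1 : Matrix n n ℂ) - T = Pᴴ * (σ' - σ) * P := by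
      rw [hPherm.eq, ← hPMP, hTdef]
      noncomm_ring
    rw [heq]
    exact hle.conjTranspose_mul_mul_same P
  have hTpd : T.PosDef := by
    refine Matrix.PosDef.of_dotProduct_mulVec_pos hTherm fun v hv => ?_
    have hPv : P *ᵥ v ≠ 0 := by
      intro h0
      apply hv
      have h1 : (Q * P) *ᵥ v = Q *ᵥ (P *ᵥ v) := (Matrix.mulVec_mulVec _ _ _).symm
      rw [hQP, Matrix.one_mulVec] at h1
      rw [h1, h0, Matrix.mulVec_zero]
    have h2 : star v ⬝ᵥ T *ᵥ v
        = star (P *ᵥ v) ⬝ᵥ (σ + (l:ℂ) • (1 : Matrix n n ℂ)) *ᵥ (P *ᵥ v) := by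
      have hT' : T = Pᴴ * (σ + (l:ℂ) • (1 : Matrix n n ℂ)) * P := by
        rw [hPherm.eq, hTdef]
      rw [hT']
      exact qf_conj P _ v
    rw [h2]
    exact hσlpd.dotProduct_mulVec_pos hPv
  set W := mfun (fun x => x⁻¹) T with hWdef
  have hWT : W * T = 1 := by
    have hid : T = mfun (fun x => x) T := (mfun_id hTherm).symm
    rw [hWdef]
    nth_rewrite 2 [hid]
    rw [mfun_mul hTherm]
    rw [mfun_congr hTherm (g := fun _ => 1) (fun i =>
      inv_mul_cancel₀ (hTpd.eigenvalues_pos i).ne')]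
    exact mfun_one hTherm
  set S := Q * J * Q with hSdef
  have hJmul : (σ + (l:ℂ) • (1 : Matrix n n ℂ)) * J = 1 := by
    rw [hσl', hJdef, mfun_mul hσh]
    rw [mfun_congr hσh (g := fun _ => 1) (fun i => mul_inv_cancel₀ (hposσ i).ne')]
    exact mfun_one hσh
  have hTS : T * S = 1 := by
    rw [hTdef, hSdef]
    calc P * (σ + (l:ℂ) • 1) * P * (Q * J * Q)
        = P * (σ + (l:ℂ) • 1) * (P * Q) * (J * Q) := by simp only [Matrix.mul_assoc]
      _ = P * ((σ + (l:ℂ) • 1) * J) * Q := by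
          rw [hPQ, Matrix.mul_one]; simp only [Matrix.mul_assoc]
      _ = P * Q := by rw [hJmul, Matrix.mul_one]
      _ = 1 := hPQ
  have hSW : S = W := (left_inv_eq_right_inv hWT hTS).symm
  have hW1 : (W - (1 : Matrix n n ℂ)).PosSemidef := by
    have heq : W - (1 : Matrix n n ℂ) = mfun (fun x => x⁻¹ - 1) T := by
      rw [mfun_sub hTherm, hWdef, mfun_one hTherm]
    rw [heq]
    refine mfun_posSemidef hTherm (fun i => ?_)
    have h1 := hTpd.eigenvalues_pos i
    have h2 := eigenvalues_le_one_of_le_one hTherm hT1 i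
    have h3 : 1 ≤ (hTherm.eigenvalues i)⁻¹ := (one_le_inv₀ h1).mpr h2
    linarith
  have hPP : P * P = J' := by
    rw [hPdef, mfun_mul hσ'h, hJ'def]
    exact mfun_congr hσ'h (fun i => by
      have h0 := hposσ' i
      simp only [hisq]
      rw [← mul_inv, Real.mul_self_sqrt h0.le])
  have hPSP : P * S * P = J := by
    rw [hSdef]
    calc P * (Q * J * Q) * P = (P * Q) * J * (Q * P) := by simp only [Matrix.mul_assoc]
      _ = J := by rw [hPQ, hQP, Matrix.one_mul, Matrix.mul_one]
  have hfinal : J - J' = Pᴴ * (W - 1) * P := by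
    rw [hPherm.eq, ← hPSP, hSW, ← hPP]
    noncomm_ring
  rw [hfinal]
  exact hW1.conjTranspose_mul_mul_same P


lemma resolvent_qf_mono {σ σ' : Matrix n n ℂ} (hσ : σ.PosSemidef) (hσ' : σ'.PosSemidef)
    (hle : (σ' - σ).PosSemidef) {l : ℝ} (hl : 0 < l) (v : n → ℂ) :
    (star v ⬝ᵥ (mfun (fun x => x / (x + l)) σ) *ᵥ v).re
      ≤ (star v ⬝ᵥ (mfun (fun x => x / (x + l)) σ') *ᵥ v).re := by
  have hrepr : ∀ (τ : Matrix n n ℂ) (hτ : τ.PosSemidef),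
      mfun (fun x => x / (x + l)) τ
        = 1 - (l:ℂ) • mfun (fun x => (x + l)⁻¹) τ := by
    intro τ hτ
    have h1 : mfun (fun x => x / (x + l)) τ
        = mfun (fun x => 1 - l * (x + l)⁻¹) τ :=
      mfun_congr hτ.1 (fun i => by
        have h0 : 0 < hτ.1.eigenvalues i + l := by
          have := hτ.eigenvalues_nonneg i; linarith
        field_simp
        ring)
    have h2 := mfun_sub hτ.1 (fun _ => (1:ℝ)) (fun x => l * (x + l)⁻¹)
    rw [h1, h2, mfun_one hτ.1, mfun_smul hτ.1]
  have hqf : ∀ (τ : Matrix n n ℂ) (hτ : τ.PosSemidef),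
      (star v ⬝ᵥ (mfun (fun x => x / (x + l)) τ) *ᵥ v).re
        = (star v ⬝ᵥ v).re - l * (star v ⬝ᵥ (mfun (fun x => (x + l)⁻¹) τ) *ᵥ v).re := by
    intro τ hτ
    rw [hrepr τ hτ, Matrix.sub_mulVec, dotProduct_sub, Complex.sub_re,
      Matrix.one_mulVec, Matrix.smul_mulVec, dotProduct_smul]
    rw [smul_eq_mul, Complex.re_ofReal_mul]
  rw [hqf σ hσ, hqf σ' hσ']
  have hres := re_qf_loewner (resolvent_antitone hσ hσ' hle hl) v
  nlinarith [hres, hl]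

open MeasureTheory in
lemma res_qf_integrable {σ : Matrix n n ℂ} (hσ : σ.PosSemidef) {t : ℝ} (ht0 : 0 < t)
    (ht1 : t < 1) (v : n → ℂ) :
    IntegrableOn (fun l => (star v ⬝ᵥ (mfun (fun x => x / (x + l)) σ) *ᵥ v).re * l ^ (t - 1))
      (Set.Ioi (0:ℝ)) := by
  have hσh := hσ.1
  set p : n → ℝ := fun i =>
    Complex.normSq ((star (hσh.eigenvectorUnitary : Matrix n n ℂ) *ᵥ v) i) with hp
  have hint : ∀ i ∈ Finset.univ, IntegrableOn
      (fun l => (hσh.eigenvalues i / (hσh.eigenvalues i + l) * l ^ (t-1)) * p i)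
      (Set.Ioi (0:ℝ)) :=
    fun i _ => (integrable_res_kernel ht0 ht1 (hσ.eigenvalues_nonneg i)).mul_const _
  have hcong : ∀ l ∈ Set.Ioi (0:ℝ),
      (star v ⬝ᵥ (mfun (fun x => x / (x + l)) σ) *ᵥ v).re * l ^ (t-1)
        = ∑ i, (hσh.eigenvalues i / (hσh.eigenvalues i + l) * l ^ (t-1)) * p i := by
    intro l hl
    rw [re_qf_mfun hσh, Finset.sum_mul]
    exact Finset.sum_congr rfl fun i _ => by ring
  have hsum : IntegrableOn
      (fun l => ∑ i, (hσh.eigenvalues i / (hσh.eigenvalues i + l) * l ^ (t-1)) * p i)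
      (Set.Ioi (0:ℝ)) := integrable_finset_sum Finset.univ hint
  exact MeasureTheory.IntegrableOn.congr_fun hsum
    (fun l hl => (hcong l hl).symm) measurableSet_Ioi

open MeasureTheory in
lemma mpow_qf_integral {σ : Matrix n n ℂ} (hσ : σ.PosSemidef) {t : ℝ} (ht0 : 0 < t)
    (ht1 : t < 1) (v : n → ℂ) :
    (star v ⬝ᵥ (mfun (fun x => if x = 0 then 0 else x ^ t) σ) *ᵥ v).re
      = (lhC t)⁻¹ * ∫ l in Set.Ioi (0:ℝ),
          (star v ⬝ᵥ (mfun (fun x => x / (x + l)) σ) *ᵥ v).re * l ^ (t - 1) := by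
  have hσh := hσ.1
  set p : n → ℝ := fun i =>
    Complex.normSq ((star (hσh.eigenvectorUnitary : Matrix n n ℂ) *ᵥ v) i) with hp
  have hint : ∀ i ∈ Finset.univ, IntegrableOn
      (fun l => (hσh.eigenvalues i / (hσh.eigenvalues i + l) * l ^ (t-1)) * p i)
      (Set.Ioi (0:ℝ)) :=
    fun i _ => (integrable_res_kernel ht0 ht1 (hσ.eigenvalues_nonneg i)).mul_const _
  have hcong : ∀ l ∈ Set.Ioi (0:ℝ),
      (star v ⬝ᵥ (mfun (fun x => x / (x + l)) σ) *ᵥ v).re * l ^ (t-1)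
        = ∑ i, (hσh.eigenvalues i / (hσh.eigenvalues i + l) * l ^ (t-1)) * p i := by
    intro l hl
    rw [re_qf_mfun hσh, Finset.sum_mul]
    exact Finset.sum_congr rfl fun i _ => by ring
  rw [setIntegral_congr_fun measurableSet_Ioi hcong, integral_finset_sum Finset.univ hint]
  have hval : ∀ i, (∫ l in Set.Ioi (0:ℝ),
      (hσh.eigenvalues i / (hσh.eigenvalues i + l) * l ^ (t-1)) * p i)
        = (lhC t * hσh.eigenvalues i ^ t) * p i := by
    intro i
    rw [MeasureTheory.integral_mul_const, integral_res_kernel ht0 ht1 (hσ.eigenvalues_nonneg i)]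
  rw [Finset.sum_congr rfl (fun i _ => hval i), re_qf_mfun hσh, Finset.mul_sum]
  refine Finset.sum_congr rfl fun i _ => ?_
  have hC := lhC_pos ht0 ht1
  by_cases h0 : hσh.eigenvalues i = 0
  · rw [if_pos h0, h0, Real.zero_rpow ht0.ne']
    ring
  · rw [if_neg h0]
    field_simp
    ring

/-- Löwner–Heinz: `x ↦ x^t` is operator monotone on PSD matrices for `t ∈ (0,1]`. -/
lemma loewner_heinz {σ σ' : Matrix n n ℂ} (hσ : σ.PosSemidef) (hσ' : σ'.PosSemidef)
    (hle : (σ' - σ).PosSemidef) {t : ℝ} (ht0 : 0 < t) (ht1 : t ≤ 1) :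
    (mfun (fun x => if x = 0 then 0 else x ^ t) σ'
      - mfun (fun x => if x = 0 then 0 else x ^ t) σ).PosSemidef := by
  rcases eq_or_lt_of_le ht1 with h1 | h1
  · -- t = 1
    have hid : ∀ (τ : Matrix n n ℂ) (hτ : τ.PosSemidef),
        mfun (fun x => if x = 0 then 0 else x ^ t) τ = τ := by
      intro τ hτ
      rw [mfun_congr hτ.1 (g := fun x => x) (fun i => by
        by_cases h : hτ.1.eigenvalues i = 0
        · rw [if_pos h, h]
        · rw [if_neg h, h1, Real.rpow_one])]
      exact mfun_id hτ.1
    rw [hid σ hσ, hid σ' hσ']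
    exact hle
  · apply Matrix.PosSemidef.of_dotProduct_mulVec_nonneg
    · exact (mfun_isHermitian hσ'.1 _).sub (mfun_isHermitian hσ.1 _)
    · intro v
      rw [Matrix.sub_mulVec, dotProduct_sub]
      rw [qf_mfun hσ'.1, qf_mfun hσ.1, ← Complex.ofReal_sub, Complex.zero_le_real,
        sub_nonneg]
      have h1' := mpow_qf_integral hσ ht0 h1 v
      have h2' := mpow_qf_integral hσ' ht0 h1 v
      rw [re_qf_mfun hσ.1] at h1'
      rw [re_qf_mfun hσ'.1] at h2'
      rw [h1', h2']
      have hC := lhC_pos ht0 h1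
      apply mul_le_mul_of_nonneg_left ?_ (inv_nonneg.mpr hC.le)
      apply MeasureTheory.setIntegral_mono_on ?_ ?_ measurableSet_Ioi ?_
      · exact res_qf_integrable hσ ht0 h1 v
      · exact res_qf_integrable hσ' ht0 h1 v
      · intro l hl
        rw [Set.mem_Ioi] at hl
        have := resolvent_qf_mono hσ hσ' hle hl v
        have hpow : (0:ℝ) ≤ l ^ (t-1) := Real.rpow_nonneg hl.le _
        exact mul_le_mul_of_nonneg_right this hpow


lemma mfun_comp (hA : A.IsHermitian) (g f : ℝ → ℝ) :
    mfun f (mfun g A) = mfun (fun x => f (g x)) A := by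
  have hGh : (mfun g A).IsHermitian := mfun_isHermitian hA g
  have hAd : mfun g A = (hA.eigenvectorUnitary : Matrix n n ℂ) *
      Matrix.diagonal (fun i => ((g (hA.eigenvalues i) : ℝ) : ℂ)) *
      star (hA.eigenvectorUnitary : Matrix n n ℂ) := mfun_of_isHermitian hA g
  rw [mfun_unitary_conj (hA.eigenvectorUnitary).2 (fun i => g (hA.eigenvalues i)) hGh hAd f]
  rw [mfun_of_isHermitian hA]

lemma dot_shift (M : Matrix n n ℂ) (a b : n → ℂ) :
    star a ⬝ᵥ (M *ᵥ b) = star (Mᴴ *ᵥ a) ⬝ᵥ b := by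
  rw [Matrix.star_mulVec, Matrix.conjTranspose_conjTranspose, Matrix.dotProduct_mulVec]

lemma sqrt_self_mul {ρ : Matrix n n ℂ} (hρ : ρ.PosSemidef) :
    mfun Real.sqrt ρ * mfun Real.sqrt ρ = ρ := by
  rw [mfun_mul hρ.1]
  rw [mfun_congr hρ.1 (g := fun x => x) (fun i =>
    Real.mul_self_sqrt (hρ.eigenvalues_nonneg i))]
  exact mfun_id hρ.1

lemma sqrt_mulVec_zero {ρ : Matrix n n ℂ} (hρ : ρ.PosSemidef) {w : n → ℂ}
    (hw : ρ *ᵥ w = 0) : mfun Real.sqrt ρ *ᵥ w = 0 := by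
  have hRh : (mfun Real.sqrt ρ).IsHermitian := mfun_isHermitian hρ.1 _
  have hRR : mfun Real.sqrt ρ * mfun Real.sqrt ρ = ρ := sqrt_self_mul hρ
  have h1 : star (mfun Real.sqrt ρ *ᵥ w) ⬝ᵥ (mfun Real.sqrt ρ *ᵥ w) = 0 := by
    have h2 := qf_conj (mfun Real.sqrt ρ) 1 w
    rw [Matrix.mul_one, hRh.eq, hRR] at h2
    rw [Matrix.one_mulVec] at h2
    rw [← h2, hw, dotProduct_zero]
  exact dotProduct_star_self_eq_zero.mp h1

lemma suppLE_mono {ρ σ σ' : Matrix n n ℂ} (hσ : σ.PosSemidef) (hσ' : σ'.PosSemidef)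
    (hle : (σ' - σ).PosSemidef) (hsupp : suppLE ρ σ) : suppLE ρ σ' := by
  intro w hw
  apply hsupp
  apply (hσ.dotProduct_mulVec_zero_iff _).mp
  have h1 : star w ⬝ᵥ σ' *ᵥ w = 0 := by rw [hw, dotProduct_zero]
  have h2 := hle.dotProduct_mulVec_nonneg w
  rw [Matrix.sub_mulVec, dotProduct_sub, h1] at h2
  have h3 := hσ.dotProduct_mulVec_nonneg w
  have h4 : star w ⬝ᵥ σ *ᵥ w ≤ 0 := by
    rw [← sub_nonneg]; simpa using h2
  exact le_antisymm h4 h3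

lemma star_mulVec_apply (V : Matrix n n ℂ) (u : n → ℂ) (i : n) :
    (star V *ᵥ u) i = star (fun k => V k i) ⬝ᵥ u := by
  simp [Matrix.mulVec, dotProduct, Matrix.star_apply]

/-- The eigencolumn of a Hermitian matrix is mapped to eigenvalue times itself. -/
lemma mulVec_eigencolumn (hA : A.IsHermitian) (i : n) :
    A *ᵥ (fun k => (hA.eigenvectorUnitary : Matrix n n ℂ) k i)
      = ((hA.eigenvalues i : ℂ)) • (fun k => (hA.eigenvectorUnitary : Matrix n n ℂ) k i) := by
  have h := hA.mulVec_eigenvectorBasis i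
  have hcol : (fun k => (hA.eigenvectorUnitary : Matrix n n ℂ) k i)
      = ⇑(hA.eigenvectorBasis i) := by
    funext k; exact hA.eigenvectorUnitary_apply k i
  rw [hcol]
  rw [h]
  funext k
  simp [Pi.smul_apply, Complex.real_smul]


lemma weight_zero_of_supp {ρ τ : Matrix n n ℂ} (hρ : ρ.PosSemidef) (hτ : τ.PosSemidef)
    (hsupp : QD.suppLE ρ τ) (v : n → ℂ) {i : n} (hi : hτ.1.eigenvalues i = 0) :
    (star (hτ.1.eigenvectorUnitary : Matrix n n ℂ) *ᵥ (mfun Real.sqrt ρ *ᵥ v)) i = 0 := by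
  rw [star_mulVec_apply]
  have hRh : (mfun Real.sqrt ρ).IsHermitian := mfun_isHermitian hρ.1 _
  have hτv : τ *ᵥ (fun k => (hτ.1.eigenvectorUnitary : Matrix n n ℂ) k i) = 0 := by
    rw [mulVec_eigencolumn hτ.1 i, hi]
    simp
  have hρv : ρ *ᵥ (fun k => (hτ.1.eigenvectorUnitary : Matrix n n ℂ) k i) = 0 :=
    hsupp _ hτv
  have hRv : mfun Real.sqrt ρ *ᵥ (fun k => (hτ.1.eigenvectorUnitary : Matrix n n ℂ) k i) = 0 :=
    sqrt_mulVec_zero hρ hρv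
  rw [dot_shift, hRh.eq, hRv]
  simp

open Filter in
set_option maxHeartbeats 1600000 in
lemma sandwich_pinv_antitone {ρ σ σ' : Matrix n n ℂ} (hρ : ρ.PosSemidef) (hσ : σ.PosSemidef)
    (hσ' : σ'.PosSemidef) (hle : (σ' - σ).PosSemidef) (hsupp : QD.suppLE ρ σ)
    {t : ℝ} (ht0 : 0 < t) (ht1 : t < 1) :
    (mfun Real.sqrt ρ * mfun (fun x => if x = 0 then 0 else x ^ (-t)) σ * mfun Real.sqrt ρ
      - mfun Real.sqrt ρ * mfun (fun x => if x = 0 then 0 else x ^ (-t)) σ'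
        * mfun Real.sqrt ρ).PosSemidef := by
  set g : ℝ → ℝ := fun x => if x = 0 then 0 else x ^ (-t) with hg
  set R := mfun Real.sqrt ρ with hR
  have hRh : R.IsHermitian := mfun_isHermitian hρ.1 _
  have hsupp' : QD.suppLE ρ σ' := suppLE_mono hσ hσ' hle hsupp
  have hherm : ∀ {τ : Matrix n n ℂ}, τ.IsHermitian → (R * mfun g τ * R).IsHermitian := by
    intro τ hτ
    have h := Matrix.isHermitian_conjTranspose_mul_mul R (mfun_isHermitian hτ g)
    rwa [hRh.eq] at h
  apply Matrix.PosSemidef.of_dotProduct_mulVec_nonneg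
  · exact (hherm hσ.1).sub (hherm hσ'.1)
  · intro v
    set u := R *ᵥ v with hu
    have hqf : ∀ (τ : Matrix n n ℂ) (f : ℝ → ℝ),
        star v ⬝ᵥ (R * mfun f τ * R) *ᵥ v = star u ⬝ᵥ (mfun f τ) *ᵥ u := by
      intro τ f
      have hcc : R * mfun f τ * R = Rᴴ * mfun f τ * R := by rw [hRh.eq]
      rw [hcc, qf_conj]
    -- the key real inequality
    have hStepA : ∀ ε : ℝ, 0 < ε →
        (star u ⬝ᵥ (mfun (fun x => (x + ε) ^ (-t)) σ') *ᵥ u).re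
          ≤ (star u ⬝ᵥ (mfun (fun x => (x + ε) ^ (-t)) σ) *ᵥ u).re := by
      intro ε hε
      have h1 := resolvent_antitone hσ hσ' hle hε
      have hJσ : (mfun (fun x => (x + ε)⁻¹) σ).PosSemidef :=
        mfun_posSemidef hσ.1 (fun i => by
          have := hσ.eigenvalues_nonneg i; positivity)
      have hJσ' : (mfun (fun x => (x + ε)⁻¹) σ').PosSemidef :=
        mfun_posSemidef hσ'.1 (fun i => by
          have := hσ'.eigenvalues_nonneg i; positivity)
      have h2 := loewner_heinz hJσ' hJσ h1 ht0 ht1.le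
      have hcomp : ∀ (τ : Matrix n n ℂ) (hτ : τ.PosSemidef),
          mfun (fun x => if x = 0 then 0 else x ^ t) (mfun (fun x => (x + ε)⁻¹) τ)
            = mfun (fun x => (x + ε) ^ (-t)) τ := by
        intro τ hτ
        rw [mfun_comp hτ.1]
        apply mfun_congr hτ.1 (fun i => ?_)
        have h0 : 0 < hτ.1.eigenvalues i + ε := by
          have := hτ.eigenvalues_nonneg i; linarith
        rw [if_neg (inv_ne_zero h0.ne'), Real.inv_rpow h0.le, ← Real.rpow_neg h0.le]
      rw [hcomp σ hσ, hcomp σ' hσ'] at h2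
      exact re_qf_loewner h2 u
    have hStepB : ∀ ε : ℝ, 0 < ε →
        (star u ⬝ᵥ (mfun (fun x => (x + ε) ^ (-t)) σ) *ᵥ u).re
          ≤ (star u ⬝ᵥ (mfun g σ) *ᵥ u).re := by
      intro ε hε
      rw [re_qf_mfun hσ.1, re_qf_mfun hσ.1]
      apply Finset.sum_le_sum
      intro i _
      by_cases h0 : hσ.1.eigenvalues i = 0
      · rw [hu, hR, weight_zero_of_supp hρ hσ hsupp v h0]
        simp
      · have hx : 0 < hσ.1.eigenvalues i :=
          lt_of_le_of_ne (hσ.eigenvalues_nonneg i) (Ne.symm h0)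
        rw [hg]
        simp only [if_neg h0]
        apply mul_le_mul_of_nonneg_right ?_ (Complex.normSq_nonneg _)
        rw [Real.rpow_neg hx.le, Real.rpow_neg (by linarith)]
        exact inv_anti₀ (Real.rpow_pos_of_pos hx t)
          (Real.rpow_le_rpow hx.le (by linarith) ht0.le)
    have hStepC : Tendsto
        (fun k : ℕ => (star u ⬝ᵥ (mfun (fun x => (x + 1/((k:ℝ)+1)) ^ (-t)) σ') *ᵥ u).re)
        atTop (nhds ((star u ⬝ᵥ (mfun g σ') *ᵥ u).re)) := by
      simp only [re_qf_mfun hσ'.1]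
      apply tendsto_finset_sum
      intro i _
      by_cases h0 : hσ'.1.eigenvalues i = 0
      · have hwz := weight_zero_of_supp hρ hσ' hsupp' v h0
        rw [← hR, ← hu] at hwz
        simp only [hwz, Complex.normSq_zero, mul_zero]
        exact tendsto_const_nhds
      · have hx : 0 < hσ'.1.eigenvalues i :=
          lt_of_le_of_ne (hσ'.eigenvalues_nonneg i) (Ne.symm h0)
        rw [hg]
        simp only [if_neg h0]
        apply Tendsto.mul_const
        have hcont : ContinuousAt (fun z : ℝ => z ^ (-t)) (hσ'.1.eigenvalues i) :=
          Real.continuousAt_rpow_const _ _ (Or.inl hx.ne')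
        have hseq : Tendsto (fun k : ℕ => hσ'.1.eigenvalues i + 1/((k:ℝ)+1)) atTop
            (nhds (hσ'.1.eigenvalues i)) := by
          have h2 := tendsto_one_div_add_atTop_nhds_zero_nat (𝕜 := ℝ)
          have h3 := Tendsto.add (tendsto_const_nhds
            (x := hσ'.1.eigenvalues i) (f := atTop)) h2
          simpa using h3
        exact (hcont.tendsto.comp hseq)
    have key : (star u ⬝ᵥ (mfun g σ') *ᵥ u).re ≤ (star u ⬝ᵥ (mfun g σ) *ᵥ u).re := by
      apply le_of_tendsto hStepC
      apply Filter.Eventually.of_forall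
      intro k
      have hεk : (0:ℝ) < 1/((k:ℝ)+1) := by positivity
      exact (hStepA _ hεk).trans (hStepB _ hεk)
    rw [Matrix.sub_mulVec, dotProduct_sub, hqf σ g, hqf σ' g]
    rw [qf_mfun hσ.1, qf_mfun hσ'.1, ← Complex.ofReal_sub, Complex.zero_le_real, sub_nonneg]
    rw [re_qf_mfun hσ.1, re_qf_mfun hσ'.1] at key
    exact key


lemma sandwich_pow_mono {ρ σ σ' : Matrix n n ℂ} (hρ : ρ.PosSemidef) (hσ : σ.PosSemidef)
    (hσ' : σ'.PosSemidef) (hle : (σ' - σ).PosSemidef) {t : ℝ} (ht0 : 0 < t) (ht1 : t ≤ 1) :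
    (mfun Real.sqrt ρ * mfun (fun x => if x = 0 then 0 else x ^ t) σ' * mfun Real.sqrt ρ
      - mfun Real.sqrt ρ * mfun (fun x => if x = 0 then 0 else x ^ t) σ
        * mfun Real.sqrt ρ).PosSemidef := by
  have h := loewner_heinz hσ hσ' hle ht0 ht1
  have h2 := conj_loewner (X := mfun Real.sqrt ρ) h
  rwa [(mfun_isHermitian hρ.1 Real.sqrt).eq] at h2

lemma gpow_eqOn {a : ℝ} (ha : a ≠ 0) :
    Set.EqOn (fun x : ℝ => x ^ a) (fun x => if x = 0 then 0 else x ^ a) (Set.Ici 0) := by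
  intro x _
  by_cases h : x = 0
  · simp [h, Real.zero_rpow ha]
  · simp [h]

lemma gpow_convexOn {a : ℝ} (ha : 1 ≤ a) :
    ConvexOn ℝ (Set.Ici 0) (fun x : ℝ => if x = 0 then 0 else x ^ a) :=
  (convexOn_rpow ha).congr (gpow_eqOn (by linarith))

lemma gpow_concaveOn {a : ℝ} (h0 : 0 < a) (h1 : a ≤ 1) :
    ConcaveOn ℝ (Set.Ici 0) (fun x : ℝ => if x = 0 then 0 else x ^ a) :=
  (Real.concaveOn_rpow h0.le h1).congr (gpow_eqOn h0.ne')

lemma gpow_monotoneOn {a : ℝ} (h0 : 0 < a) :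
    MonotoneOn (fun x : ℝ => if x = 0 then 0 else x ^ a) (Set.Ici 0) := by
  intro x hx y hy hxy
  rw [← gpow_eqOn h0.ne' hx, ← gpow_eqOn h0.ne' hy]
  exact Real.rpow_le_rpow hx hxy h0.le

lemma sandwich_posSemidef {ρ σ : Matrix n n ℂ} (hρ : ρ.PosSemidef) (hσ : σ.PosSemidef)
    (f : ℝ → ℝ) (hf : ∀ i, 0 ≤ f (hσ.1.eigenvalues i)) :
    (mfun Real.sqrt ρ * mfun f σ * mfun Real.sqrt ρ).PosSemidef := by
  have h := (mfun_posSemidef hσ.1 hf).mul_mul_conjTranspose_same (mfun Real.sqrt ρ)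
  rwa [(mfun_isHermitian hρ.1 Real.sqrt).eq] at h

lemma gpow_eig_nonneg {σ : Matrix n n ℂ} (hσ : σ.PosSemidef) (a : ℝ) (i : n) :
    0 ≤ (if hσ.1.eigenvalues i = 0 then 0 else hσ.1.eigenvalues i ^ a) := by
  by_cases h : hσ.1.eigenvalues i = 0
  · simp [h]
  · have hx : 0 < hσ.1.eigenvalues i :=
      lt_of_le_of_ne (hσ.eigenvalues_nonneg i) (Ne.symm h)
    simp only [if_neg h]
    positivity

set_option maxHeartbeats 1000000 in
lemma Qstar_eq {α : ℝ} (hα : 0 < α) {ρ σ : Matrix n n ℂ} (hρ : ρ.PosSemidef)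
    (hσ : σ.PosSemidef) :
    Qstar α ρ σ = ((mfun (fun x => if x = 0 then 0 else x ^ α)
      (mfun Real.sqrt ρ * mfun (fun x => if x = 0 then 0 else x ^ ((1 - α)/α)) σ
        * mfun Real.sqrt ρ)).trace).re := by
  set R := mfun Real.sqrt ρ with hRdef
  have hRh : R.IsHermitian := mfun_isHermitian hρ.1 _
  have hRR : R * R = ρ := sqrt_self_mul hρ
  set s := (1 - α)/(2*α) with hs
  have hmpowherm : (mpow σ s).IsHermitian := mfun_isHermitian hσ.1 _
  set X := mpow σ s * R with hX
  have hXH : Xᴴ = R * mpow σ s := by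
    rw [hX, Matrix.conjTranspose_mul, hRh.eq, hmpowherm.eq]
  have hXXH : X * Xᴴ = mpow σ s * ρ * mpow σ s := by
    rw [hX, hXH, Matrix.mul_assoc, ← Matrix.mul_assoc R R, hRR, ← Matrix.mul_assoc]
  have hmm : mpow σ s * mpow σ s
      = mfun (fun x => if x = 0 then 0 else x ^ ((1 - α)/α)) σ := by
    show mfun _ σ * mfun _ σ = _
    rw [mfun_mul hσ.1]
    apply mfun_congr hσ.1 (fun i => ?_)
    by_cases h : hσ.1.eigenvalues i = 0
    · simp [h]
    · have hx : 0 < hσ.1.eigenvalues i :=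
        lt_of_le_of_ne (hσ.eigenvalues_nonneg i) (Ne.symm h)
      simp only [if_neg h]
      rw [← Real.rpow_add hx]
      congr 1
      rw [hs]
      field_simp
      ring
  have hXHX : Xᴴ * X
      = R * mfun (fun x => if x = 0 then 0 else x ^ ((1 - α)/α)) σ * R := by
    rw [hXH, hX, Matrix.mul_assoc, ← Matrix.mul_assoc (mpow σ s), hmm, ← Matrix.mul_assoc]
  have hswap := trace_mfun_swap X (fun x => if x = 0 then 0 else x ^ α) (by simp)
  rw [hXXH, hXHX] at hswap
  show ((mfun _ (mpow σ s * ρ * mpow σ s)).trace).re = _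
  rw [hswap]

lemma trace_mfun_pos {M : Matrix n n ℂ} (hM : M.PosSemidef) {f : ℝ → ℝ}
    (hf0 : f 0 = 0) (hfpos : ∀ x, 0 < x → 0 < f x) (hMne : M ≠ 0) :
    0 < ((mfun f M).trace).re := by
  rw [trace_mfun hM.1, Complex.ofReal_re]
  have hexist : ∃ i, hM.1.eigenvalues i ≠ 0 := by
    by_contra hfor
    push_neg at hfor
    apply hMne
    have hsp := hM.1.spectral_theorem
    have hdz : Matrix.diagonal (RCLike.ofReal ∘ hM.1.eigenvalues) = (0 : Matrix n n ℂ) := by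
      ext i j
      by_cases h : i = j <;> simp [Matrix.diagonal_apply, h, hfor]
    rw [hsp, hdz]
    simp
  obtain ⟨i, hi⟩ := hexist
  refine Finset.sum_pos' (fun j _ => ?_) ⟨i, Finset.mem_univ i, ?_⟩
  · by_cases h : hM.1.eigenvalues j = 0
    · rw [h, hf0]
    · exact (hfpos _ (lt_of_le_of_ne (hM.eigenvalues_nonneg j) (Ne.symm h))).le
  · exact hfpos _ (lt_of_le_of_ne (hM.eigenvalues_nonneg i) (Ne.symm hi))

lemma mfun_mulVec_eigencolumn (hA : A.IsHermitian) (f : ℝ → ℝ) (i : n) :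
    mfun f A *ᵥ (fun k => (hA.eigenvectorUnitary : Matrix n n ℂ) k i)
      = ((f (hA.eigenvalues i) : ℂ)) • (fun k => (hA.eigenvectorUnitary : Matrix n n ℂ) k i) := by
  have hcol : (fun k => (hA.eigenvectorUnitary : Matrix n n ℂ) k i)
      = ⇑(hA.eigenvectorBasis i) := by
    funext k; exact hA.eigenvectorUnitary_apply k i
  rw [hcol, mfun_of_isHermitian hA, ← Matrix.mulVec_mulVec, ← Matrix.mulVec_mulVec,
    hA.star_eigenvectorUnitary_mulVec, Matrix.diagonal_mulVec_single,
    Matrix.mulVec_single]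
  funext k
  simp [Pi.smul_apply]
  ring

set_option maxHeartbeats 1000000 in
lemma Qstar_pos {α : ℝ} (hα : 0 < α) {ρ σ : Matrix n n ℂ} (hρ : ρ.PosSemidef)
    (hρtr : ρ.trace = 1) (hσ : σ.PosSemidef) (hsupp : QD.suppLE ρ σ) :
    0 < Qstar α ρ σ := by
  rw [Qstar_eq hα hρ hσ]
  set R := mfun Real.sqrt ρ with hRdef
  set h : ℝ → ℝ := fun x => if x = 0 then 0 else x ^ ((1 - α)/α) with hh
  set M := R * mfun h σ * R with hM
  have hMpsd : M.PosSemidef := sandwich_posSemidef hρ hσ h (gpow_eig_nonneg hσ _)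
  apply trace_mfun_pos hMpsd (by simp) (fun x hx => by
    simp only [if_neg hx.ne']
    positivity)
  -- M ≠ 0
  intro hM0
  -- find a positive eigenvalue of ρ
  have htrρ : (∑ i, hρ.1.eigenvalues i : ℝ) = 1 := by
    have h1 : ρ.trace = ((∑ i, hρ.1.eigenvalues i : ℝ) : ℂ) := by
      conv_lhs => rw [show ρ = mfun (fun x => x) ρ from (mfun_id hρ.1).symm]
      exact trace_mfun hρ.1 _
    rw [hρtr] at h1
    exact_mod_cast h1.symm
  have hexist : ∃ i, hρ.1.eigenvalues i ≠ 0 := by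
    by_contra hfor
    push_neg at hfor
    rw [Finset.sum_congr rfl (fun i _ => hfor i)] at htrρ
    simp at htrρ
  obtain ⟨i, hi⟩ := hexist
  have hr : 0 < hρ.1.eigenvalues i :=
    lt_of_le_of_ne (hρ.eigenvalues_nonneg i) (Ne.symm hi)
  set v : n → ℂ := fun k => (hρ.1.eigenvectorUnitary : Matrix n n ℂ) k i with hv
  set u : n → ℂ := R *ᵥ v with hudef
  have hqfM : star v ⬝ᵥ M *ᵥ v = star u ⬝ᵥ (mfun h σ) *ᵥ u := by
    have hcc : M = Rᴴ * mfun h σ * R := by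
      rw [hM, (mfun_isHermitian hρ.1 Real.sqrt).eq]
    rw [hcc, qf_conj]
  have hqf0 : star u ⬝ᵥ (mfun h σ) *ᵥ u = 0 := by
    rw [← hqfM, hM0]
    simp
  -- σ *ᵥ u = 0
  have hσu : σ *ᵥ u = 0 := by
    apply (hσ.dotProduct_mulVec_zero_iff u).mp
    rw [qf_mfun hσ.1 h u] at hqf0
    have hsum0 : (∑ j, h (hσ.1.eigenvalues j)
        * Complex.normSq ((star (hσ.1.eigenvectorUnitary : Matrix n n ℂ) *ᵥ u) j) : ℝ) = 0 := by
      exact_mod_cast hqf0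
    have hterms := (Finset.sum_eq_zero_iff_of_nonneg (fun j _ =>
      mul_nonneg (gpow_eig_nonneg hσ _ j) (Complex.normSq_nonneg _))).mp hsum0
    have hid := qf_mfun hσ.1 (fun x => x) u
    rw [mfun_id hσ.1] at hid
    rw [hid]
    have : (∑ j, hσ.1.eigenvalues j
        * Complex.normSq ((star (hσ.1.eigenvectorUnitary : Matrix n n ℂ) *ᵥ u) j) : ℝ) = 0 := by
      apply Finset.sum_eq_zero
      intro j _
      by_cases hz : hσ.1.eigenvalues j = 0
      · rw [hz, zero_mul]
      · have := hterms j (Finset.mem_univ j)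
        have hpos : 0 < h (hσ.1.eigenvalues j) := by
          rw [hh]
          simp only [if_neg hz]
          have : 0 < hσ.1.eigenvalues j :=
            lt_of_le_of_ne (hσ.eigenvalues_nonneg j) (Ne.symm hz)
          positivity
        have hq0 : Complex.normSq ((star (hσ.1.eigenvectorUnitary : Matrix n n ℂ) *ᵥ u) j) = 0 := by
          by_contra hq
          exact hq (by nlinarith [Complex.normSq_nonneg ((star (hσ.1.eigenvectorUnitary : Matrix n n ℂ) *ᵥ u) j)])
        rw [hq0, mul_zero]
    rw [this]
    simp
  have hρu : ρ *ᵥ u = 0 := hsupp u hσu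
  -- but u = sqrt r • v and ρ v = r v
  have hRu : R *ᵥ v = (Real.sqrt (hρ.1.eigenvalues i) : ℂ) • v := by
    rw [hRdef]
    exact mfun_mulVec_eigencolumn hρ.1 Real.sqrt i
  have hρv : ρ *ᵥ v = ((hρ.1.eigenvalues i : ℝ) : ℂ) • v := by
    have := mfun_mulVec_eigencolumn hρ.1 (fun x => x) i
    rwa [mfun_id hρ.1] at this
  have hvne : v ≠ 0 := by
    intro hv0
    have := unit_column (hρ.1.eigenvectorUnitary).2 i
    rw [show (fun k => (hρ.1.eigenvectorUnitary : Matrix n n ℂ) k i) = v from rfl, hv0] at this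
    simp at this
  have : ρ *ᵥ u = ((Real.sqrt (hρ.1.eigenvalues i) : ℂ) * (hρ.1.eigenvalues i : ℝ)) • v := by
    rw [hudef, hRu, Matrix.mulVec_smul, hρv, smul_smul]
  rw [hρu] at this
  have hcoef : ((Real.sqrt (hρ.1.eigenvalues i) : ℂ) * ((hρ.1.eigenvalues i : ℝ) : ℂ)) ≠ 0 := by
    apply mul_ne_zero
    · simp only [ne_eq, Complex.ofReal_eq_zero]
      exact (Real.sqrt_pos.mpr hr).ne'
    · simp only [ne_eq, Complex.ofReal_eq_zero]
      exact hr.ne'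
  exact hvne (by
    have := this.symm
    rwa [smul_eq_zero, or_iff_right hcoef] at this)

lemma Qstar_mono_of_lt_one {α : ℝ} (hhalf : 1/2 ≤ α) (hlt : α < 1)
    {ρ σ σ' : Matrix n n ℂ} (hρ : ρ.PosSemidef) (hσ : σ.PosSemidef)
    (hσ' : σ'.PosSemidef) (hle : (σ' - σ).PosSemidef) :
    Qstar α ρ σ ≤ Qstar α ρ σ' := by
  have hα : 0 < α := by linarith
  have ht0 : 0 < (1 - α)/α := div_pos (by linarith) hα
  have ht1 : (1 - α)/α ≤ 1 := by
    rw [div_le_one hα]; linarith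
  rw [Qstar_eq hα hρ hσ, Qstar_eq hα hρ hσ']
  exact trace_mfun_mono_concave
    (sandwich_posSemidef hρ hσ _ (gpow_eig_nonneg hσ _))
    (sandwich_posSemidef hρ hσ' _ (gpow_eig_nonneg hσ' _))
    (sandwich_pow_mono hρ hσ hσ' hle ht0 ht1)
    (gpow_concaveOn hα hlt.le) (gpow_monotoneOn hα)

lemma Qstar_anti_of_gt_one {α : ℝ} (hgt : 1 < α)
    {ρ σ σ' : Matrix n n ℂ} (hρ : ρ.PosSemidef) (hσ : σ.PosSemidef)
    (hσ' : σ'.PosSemidef) (hle : (σ' - σ).PosSemidef) (hsupp : QD.suppLE ρ σ) :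
    Qstar α ρ σ' ≤ Qstar α ρ σ := by
  have hα : 0 < α := by linarith
  have ht0 : 0 < (α - 1)/α := div_pos (by linarith) hα
  have ht1 : (α - 1)/α < 1 := by
    rw [div_lt_one hα]; linarith
  rw [Qstar_eq hα hρ hσ, Qstar_eq hα hρ hσ']
  have hneg : (1 - α)/α = -((α - 1)/α) := by ring
  rw [hneg]
  exact trace_mfun_mono_convex
    (sandwich_posSemidef hρ hσ' _ (gpow_eig_nonneg hσ' _))
    (sandwich_posSemidef hρ hσ _ (gpow_eig_nonneg hσ _))
    (sandwich_pinv_antitone hρ hσ hσ' hle hsupp ht0 ht1)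
    (gpow_convexOn hgt.le) (gpow_monotoneOn hα)

end QDAux


open QD Matrix in
/-- monotonicity of the sandwiched Rényi divergence in the second
argument: `σ' ≥ σ` implies `D*_α(ρ‖σ') ≤ D*_α(ρ‖σ)` for `α ≥ 1/2`, `α ≠ 1`. -/
theorem dstar_mono_in_sigma
    {n : Type*} [Fintype n] [DecidableEq n] (ρ σ σ' : Matrix n n ℂ)
    (hρ : IsState ρ) (hσ : σ.PosSemidef) (hσ' : σ'.PosSemidef)
    (hle : (σ' - σ).PosSemidef)
    (α : ℝ) (hα : 1/2 ≤ α) (hα1 : α ≠ 1) :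
    DstarE α ρ σ' ≤ DstarE α ρ σ := by
  classical
  obtain ⟨hρpsd, hρtr⟩ := hρ
  rcases lt_trichotomy α 1 with hlt | heq | hgt
  · -- α < 1
    by_cases hq : 0 < Qstar α ρ σ
    · have hmono := QDAux.Qstar_mono_of_lt_one hα hlt hρpsd hσ hσ' hle
      have hq' : 0 < Qstar α ρ σ' := lt_of_lt_of_le hq hmono
      have hL : DstarE α ρ σ' = ((Dstar α ρ σ' : ℝ) : EReal) := by
        simp only [DstarE]
        rw [if_pos (Or.inl ⟨hlt, hq'⟩)]
      have hR : DstarE α ρ σ = ((Dstar α ρ σ : ℝ) : EReal) := by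
        simp only [DstarE]
        rw [if_pos (Or.inl ⟨hlt, hq⟩)]
      rw [hL, hR, EReal.coe_le_coe_iff]
      simp only [Dstar]
      have hlog : Real.logb 2 (Qstar α ρ σ) ≤ Real.logb 2 (Qstar α ρ σ') :=
        Real.logb_le_logb_of_le (by norm_num) hq hmono
      have hinv : (α - 1)⁻¹ ≤ 0 := inv_nonpos.mpr (by linarith)
      exact mul_le_mul_of_nonpos_left hlog hinv
    · have hR : DstarE α ρ σ = ⊤ := by
        simp only [DstarE]
        rw [if_neg ?_]
        rintro (⟨_, h⟩ | ⟨h, _⟩ | h)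
        exacts [hq h, absurd h (by linarith), hα1 h]
      rw [hR]
      exact le_top
  · exact absurd heq hα1
  · -- 1 < α
    by_cases hsupp : suppLE ρ σ
    · have hsupp' : suppLE ρ σ' := QDAux.suppLE_mono hσ hσ' hle hsupp
      have hanti := QDAux.Qstar_anti_of_gt_one hgt hρpsd hσ hσ' hle hsupp
      have hq' : 0 < Qstar α ρ σ' :=
        QDAux.Qstar_pos (by linarith) hρpsd hρtr hσ' hsupp'
      have hL : DstarE α ρ σ' = ((Dstar α ρ σ' : ℝ) : EReal) := by
        simp only [DstarE]
        rw [if_pos (Or.inr (Or.inl ⟨hgt, hsupp'⟩))]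
      have hR : DstarE α ρ σ = ((Dstar α ρ σ : ℝ) : EReal) := by
        simp only [DstarE]
        rw [if_pos (Or.inr (Or.inl ⟨hgt, hsupp⟩))]
      rw [hL, hR, EReal.coe_le_coe_iff]
      simp only [Dstar]
      have hlog : Real.logb 2 (Qstar α ρ σ') ≤ Real.logb 2 (Qstar α ρ σ) :=
        Real.logb_le_logb_of_le (by norm_num) hq' hanti
      have hinv : 0 ≤ (α - 1)⁻¹ := inv_nonneg.mpr (by linarith)
      exact mul_le_mul_of_nonneg_left hlog hinv
    · have hR : DstarE α ρ σ = ⊤ := by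
        simp only [DstarE]
        rw [if_neg ?_]
        rintro (⟨h, _⟩ | ⟨_, h⟩ | h)
        exacts [absurd h (by linarith), hsupp h, hα1 h]
      rw [hR]
      exact le_top
end
end
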